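/- arXiv:2211.13100 — 12 statements merged into one kernel-verified Lean document; each statement's English description precedes it below -/
import Mathlib

section
/- Let (P_t)_{t≥0}, (D_t)_{t≥1}, (q_t)_{t≥0} be real sequences with q_0 = 1, q_t > 0, P_t > 0 and D_t ≥ 0 for all t, satisfying the no-arbitrage condition q_t·P_t = q_{t+1}·(P_{t+1} + D_{t+1}) for all t ≥ 0. Then the limit lim_{T→∞} q_T·P_T exists, and this limit is strictly positive if and only if ∑_{t=1}^∞ D_t/P_t < ∞. (Bubble Characterization Lemma.) -/
/-!
Writing `r t = D (t + 1) / P (t + 1)`, the no-arbitrage condition reads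
`q t * P t = q (t + 1) * P (t + 1) * (1 + r t)`, so that `q T * P T = P 0 / ∏_{t < T} (1 + r t)`.
Since `r ≥ 0`, these partial products dominate `1 + ∑_{t < T} r t`, so they tend to infinity
when `∑ r t = ∞`, while a summable `r` makes `∏ (1 + r t)` converge to a limit `≥ 1`.
-/

open Filter Topology Finset

theorem Finset.one_add_sum_le_prod_one_add {ι R : Type*} [CommSemiring R] [PartialOrder R]
    [IsOrderedRing R] (s : Finset ι) {f : ι → R} (hf : ∀ i ∈ s, 0 ≤ f i) :
    1 + ∑ i ∈ s, f i ≤ ∏ i ∈ s, (1 + f i) := by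
  classical
  induction s using Finset.induction_on with
  | empty => simp
  | insert a s ha ih =>
    have hfa := hf a (mem_insert_self a s)
    have hsum : 0 ≤ ∑ i ∈ s, f i := sum_nonneg fun i hi => hf i (mem_insert_of_mem hi)
    rw [sum_insert ha, prod_insert ha]
    calc 1 + (f a + ∑ i ∈ s, f i) ≤ 1 + (f a + ∑ i ∈ s, f i) + f a * ∑ i ∈ s, f i :=
          le_add_of_nonneg_right (mul_nonneg hfa hsum)
      _ = (1 + f a) * (1 + ∑ i ∈ s, f i) := by ring
      _ ≤ (1 + f a) * ∏ i ∈ s, (1 + f i) :=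
          mul_le_mul_of_nonneg_left (ih fun i hi => hf i (mem_insert_of_mem hi))
            (add_nonneg zero_le_one hfa)

section OneAddProducts

variable {r : ℕ → ℝ}

theorem sum_range_le_prod_range_one_add (hr : ∀ i, 0 ≤ r i) (T : ℕ) :
    ∑ i ∈ range T, r i ≤ ∏ i ∈ range T, (1 + r i) :=
  (le_add_of_nonneg_left zero_le_one).trans
    ((range T).one_add_sum_le_prod_one_add fun i _ => hr i)

theorem exists_tendsto_prod_range_one_add_of_summable (hr : ∀ i, 0 ≤ r i) (hs : Summable r) :
    ∃ B, 1 ≤ B ∧ Tendsto (fun T => ∏ i ∈ range T, (1 + r i)) atTop (𝓝 B) := by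
  have hB := (Real.multipliable_one_add_of_summable hs).tendsto_prod_tprod_nat
  refine ⟨_, ge_of_tendsto' hB fun T => ?_, hB⟩
  exact (le_add_of_nonneg_right (sum_nonneg fun i _ => hr i)).trans
    ((range T).one_add_sum_le_prod_one_add fun i _ => hr i)

theorem tendsto_prod_range_one_add_atTop_of_not_summable (hr : ∀ i, 0 ≤ r i)
    (hs : ¬Summable r) : Tendsto (fun T => ∏ i ∈ range T, (1 + r i)) atTop atTop :=
  tendsto_atTop_mono (sum_range_le_prod_range_one_add hr)
    ((not_summable_iff_tendsto_nat_atTop_of_nonneg hr).mp hs)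

theorem exists_tendsto_div_prod_range_one_add_pos_iff_summable (hr : ∀ i, 0 ≤ r i) {c : ℝ}
    (hc : 0 < c) :
    ∃ L, Tendsto (fun T => c / ∏ i ∈ range T, (1 + r i)) atTop (𝓝 L) ∧ (0 < L ↔ Summable r) := by
  by_cases hs : Summable r
  · obtain ⟨B, hB1, hB⟩ := exists_tendsto_prod_range_one_add_of_summable hr hs
    have hB0 : 0 < B := zero_lt_one.trans_le hB1
    exact ⟨c / B, tendsto_const_nhds.div hB hB0.ne', iff_of_true (div_pos hc hB0) hs⟩
  · exact ⟨0,
      tendsto_const_nhds.div_atTop (tendsto_prod_range_one_add_atTop_of_not_summable hr hs),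
      iff_of_false (lt_irrefl 0) hs⟩

end OneAddProducts

theorem mul_mul_prod_range_one_add_div_eq {K : Type*} [Field K] {P D q : ℕ → K}
    (hP : ∀ t, P (t + 1) ≠ 0)
    (noarb : ∀ t, q t * P t = q (t + 1) * (P (t + 1) + D (t + 1))) (T : ℕ) :
    q T * P T * ∏ i ∈ range T, (1 + D (i + 1) / P (i + 1)) = q 0 * P 0 := by
  induction T with
  | zero => simp
  | succ n ih =>
    have hstep : q (n + 1) * P (n + 1) * (1 + D (n + 1) / P (n + 1)) = q n * P n := by
      have hPn := hP n
      rw [noarb n]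
      field_simp
    rw [prod_range_succ, ← ih, ← hstep]
    ring

theorem bubble_characterization_general
    (P D q : ℕ → ℝ)
    (hq0 : q 0 = 1)
    (hP : ∀ t, 0 < P t)
    (hD : ∀ t, 1 ≤ t → 0 ≤ D t)
    (noarb : ∀ t, q t * P t = q (t + 1) * (P (t + 1) + D (t + 1))) :
    ∃ L : ℝ, Tendsto (fun T => q T * P T) atTop (𝓝 L) ∧
      (0 < L ↔ Summable (fun t => D (t + 1) / P (t + 1))) := by
  have hr : ∀ t, 0 ≤ D (t + 1) / P (t + 1) := fun t =>
    div_nonneg (hD _ (Nat.le_add_left 1 t)) (hP _).le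
  have hqP : (fun T => q T * P T) =
      fun T => P 0 / ∏ i ∈ range T, (1 + D (i + 1) / P (i + 1)) := by
    funext T
    have hprod : 0 < ∏ i ∈ range T, (1 + D (i + 1) / P (i + 1)) :=
      prod_pos fun i _ => add_pos_of_pos_of_nonneg one_pos (hr i)
    rw [eq_div_iff hprod.ne', mul_mul_prod_range_one_add_div_eq (fun t => (hP _).ne') noarb,
      hq0, one_mul]
  rw [hqP]
  exact exists_tendsto_div_prod_range_one_add_pos_iff_summable hr (hP 0)

/-- **Bubble Characterization Lemma.** Given price, dividend and date-0 price sequences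
satisfying the no-arbitrage condition, the limit of `q T * P T` exists and is strictly
positive if and only if the sum of dividend-price ratios is finite. -/
theorem bubble_characterization
    (P D q : ℕ → ℝ)
    (hq0 : q 0 = 1)
    (hq : ∀ t, 0 < q t)
    (hP : ∀ t, 0 < P t)
    (hD : ∀ t, 1 ≤ t → 0 ≤ D t)
    (noarb : ∀ t, q t * P t = q (t + 1) * (P (t + 1) + D (t + 1))) :
    ∃ L : ℝ, Tendsto (fun T => q T * P T) atTop (𝓝 L) ∧
      (0 < L ↔ Summable (fun t => D (t + 1) / P (t + 1))) :=
  bubble_characterization_general P D q hq0 hP hD noarb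
end

section
/- Suppose F satisfies Assumption 2. Then lim_{K→∞} (K·F_K(K,1) − F_X(K,1))/K = m; in particular, there exists K̄ > 0 such that F_X(K,1) < K·F_K(K,1) for all K ≥ K̄, and consequently limsup_{K→∞} [log(F_X(K,1)/(K·F_K(K,1)))/log K] ≤ 0. (First part of the Elasticity Lemma: the elasticity of substitution between capital and land is at least 1 at high capital levels.) -/
/-!
Euler's theorem for the degree-one homogeneous `F` gives `F_X(K,1) = F(K,1) - K F_K(K,1)`, so
`(K F_K(K,1) - F_X(K,1))/K = 2 F_K(K,1) - F(K,1)/K → 2m - m = m`. Since `m > 0`, eventually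
`F_X(K,1) < K F_K(K,1)`, so the ratio lies in `(0, 1)` and its logarithm is negative while
`log K > 0`.
-/

open Filter Topology

/-- Only partial derivatives are available, so differentiate
`x ↦ F K x = (x / X) F (K X / x) X` at `x = X` instead of `t ↦ F (t K) (t X)` at `t = 1`. -/
theorem euler_relation_of_homogeneous {F : ℝ → ℝ → ℝ} {K X FK FX : ℝ} (hK : 0 < K) (hX : 0 < X)
    (hhomog : ∀ c K X : ℝ, 0 < c → 0 < K → 0 < X → F (c * K) (c * X) = c * F K X)
    (hFK : HasDerivAt (fun k => F k X) FK K) (hFX : HasDerivAt (fun x => F K x) FX X) :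
    K * FK + X * FX = F K X := by
  have hscale : HasDerivAt (fun x : ℝ => K * X / x) (-(K * X) / X ^ 2) X := by
    simpa [div_eq_mul_inv] using (hasDerivAt_inv hX.ne').const_mul (K * X)
  have hinner : HasDerivAt (fun x : ℝ => F (K * X / x) X) (FK * (-(K * X) / X ^ 2)) X := by
    have hFK' : HasDerivAt (fun k => F k X) FK (K * X / X) := by
      rwa [mul_div_cancel_right₀ K hX.ne']
    exact hFK'.comp X hscale
  have hprod : HasDerivAt (fun x : ℝ => x / X * F (K * X / x) X)
      (1 / X * F (K * X / X) X + X / X * (FK * (-(K * X) / X ^ 2))) X :=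
    ((hasDerivAt_id X).div_const X).mul hinner
  have hrewrite : (fun x : ℝ => x / X * F (K * X / x) X) =ᶠ[𝓝 X] fun x => F K x := by
    filter_upwards [eventually_gt_nhds hX] with x hx
    have h := hhomog (x / X) (K * X / x) X (div_pos hx hX) (by positivity) hX
    rw [div_mul_cancel₀ x hX.ne', show x / X * (K * X / x) = K by field_simp] at h
    exact h.symm
  have hFX' := (hprod.congr_of_eventuallyEq hrewrite.symm).unique hFX
  rw [mul_div_cancel_right₀ K hX.ne'] at hFX'
  field_simp at hFX'
  linarith

/-- No boundedness hypothesis is needed: if the set of eventual upper bounds is not bounded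
below, its `sInf` is the junk value `0`. -/
theorem Real.limsup_nonpos_of_eventually_nonpos {α : Type*} {l : Filter α} {u : α → ℝ}
    (h : ∀ᶠ a in l, u a ≤ 0) : limsup u l ≤ 0 := by
  rw [limsup_eq]
  exact Real.sInf_nonpos' ⟨0, h, le_rfl⟩

theorem elasticity_lemma_general_general
    (F FK FX : ℝ → ℝ → ℝ) (m : ℝ) (hm : 0 < m)
    (hhomog : ∀ c K X : ℝ, 0 < c → 0 < K → 0 < X → F (c * K) (c * X) = c * F K X)
    (hFK : ∀ K X : ℝ, 0 < K → 0 < X → HasDerivAt (fun k => F k X) (FK K X) K)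
    (hFX : ∀ K X : ℝ, 0 < K → 0 < X → HasDerivAt (fun x => F K x) (FX K X) X)
    (hFXpos : ∀ K X : ℝ, 0 < K → 0 < X → 0 < FX K X)
    (hlimavg : Tendsto (fun K => F K 1 / K) atTop (𝓝 m))
    (hlimFK : Tendsto (fun K => FK K 1) atTop (𝓝 m)) :
    Tendsto (fun K => (K * FK K 1 - FX K 1) / K) atTop (𝓝 m) ∧
    (∃ Kbar : ℝ, 0 < Kbar ∧ ∀ K ≥ Kbar, FX K 1 < K * FK K 1) ∧
    Filter.limsup (fun K => Real.log (FX K 1 / (K * FK K 1)) / Real.log K) atTop ≤ 0 := by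
  have hlim : Tendsto (fun K => (K * FK K 1 - FX K 1) / K) atTop (𝓝 m) := by
    have h := (hlimFK.const_mul 2).sub hlimavg
    rw [two_mul, add_sub_cancel_right] at h
    refine h.congr' ?_
    filter_upwards [eventually_gt_atTop 0] with K hK
    have heuler := euler_relation_of_homogeneous hK one_pos hhomog (hFK K 1 hK one_pos)
      (hFX K 1 hK one_pos)
    field_simp
    linarith
  have hlt : ∀ᶠ K in atTop, 1 < K ∧ FX K 1 < K * FK K 1 := by
    filter_upwards [eventually_gt_atTop 1, hlim.eventually (eventually_gt_nhds hm)] with K hK hpos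
    exact ⟨hK, by linarith [(div_pos_iff_of_pos_right (one_pos.trans hK)).mp hpos]⟩
  refine ⟨hlim, ?_, Real.limsup_nonpos_of_eventually_nonpos ?_⟩
  · obtain ⟨K₀, hK₀⟩ := hlt.exists_forall_of_atTop
    exact ⟨max K₀ 1, lt_max_of_lt_right one_pos, fun K hK => (hK₀ K (le_of_max_le_left hK)).2⟩
  · filter_upwards [hlt] with K ⟨hK, hFXlt⟩
    have hFXpos' := hFXpos K 1 (one_pos.trans hK) one_pos
    have hdenom := hFXpos'.trans hFXlt
    have hratio : Real.log (FX K 1 / (K * FK K 1)) < 0 :=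
      Real.log_neg (div_pos hFXpos' hdenom) ((div_lt_one hdenom).mpr hFXlt)
    exact div_nonpos_of_nonpos_of_nonneg hratio.le (Real.log_pos hK).le

/-- **Elasticity Lemma, general part.** Under Assumption 2 (constant returns to scale,
concavity, continuous differentiability with positive marginal products, and
`F(K,1)/K → m`, `F_K(K,1) → m` with `m > 0`), we have
`(K·F_K(K,1) − F_X(K,1))/K → m`; in particular `F_X(K,1) < K·F_K(K,1)` for all large `K`,
and consequently `limsup_{K→∞} log(F_X(K,1)/(K·F_K(K,1)))/log K ≤ 0`. -/
theorem elasticity_lemma_general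
    (F FK FX : ℝ → ℝ → ℝ) (m : ℝ) (hm : 0 < m)
    (hpos : ∀ K X : ℝ, 0 < K → 0 < X → 0 < F K X)
    (hhomog : ∀ c K X : ℝ, 0 < c → 0 < K → 0 < X → F (c * K) (c * X) = c * F K X)
    (hconc : ConcaveOn ℝ (Set.Ioi 0 ×ˢ Set.Ioi 0) (fun p : ℝ × ℝ => F p.1 p.2))
    (hFK : ∀ K X : ℝ, 0 < K → 0 < X → HasDerivAt (fun k => F k X) (FK K X) K)
    (hFX : ∀ K X : ℝ, 0 < K → 0 < X → HasDerivAt (fun x => F K x) (FX K X) X)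
    (hFKpos : ∀ K X : ℝ, 0 < K → 0 < X → 0 < FK K X)
    (hFXpos : ∀ K X : ℝ, 0 < K → 0 < X → 0 < FX K X)
    (hFKcont : ContinuousOn (fun p : ℝ × ℝ => FK p.1 p.2) (Set.Ioi 0 ×ˢ Set.Ioi 0))
    (hFXcont : ContinuousOn (fun p : ℝ × ℝ => FX p.1 p.2) (Set.Ioi 0 ×ˢ Set.Ioi 0))
    (hlimavg : Tendsto (fun K => F K 1 / K) atTop (𝓝 m))
    (hlimFK : Tendsto (fun K => FK K 1) atTop (𝓝 m)) :
    Tendsto (fun K => (K * FK K 1 - FX K 1) / K) atTop (𝓝 m) ∧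
    (∃ Kbar : ℝ, 0 < Kbar ∧ ∀ K ≥ Kbar, FX K 1 < K * FK K 1) ∧
    Filter.limsup (fun K => Real.log (FX K 1 / (K * FK K 1)) / Real.log K) atTop ≤ 0 :=
  elasticity_lemma_general_general F FK FX m hm hhomog hFK hFX hFXpos hlimavg hlimFK
end

section
/- For the CES production function, lim_{k→∞} d/dk [log(F_X(e^k,1)/F_K(e^k,1))] equals ρ if ρ < 1, equals α if ρ = 1, and equals 0 if ρ > 1; equivalently, the elasticity of substitution σ(K,1), defined as the reciprocal of this derivative, tends to 1/ρ, 1/α, and ∞, respectively, as K → ∞. (CES part of the Elasticity Lemma.) -/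
open Filter Topology

/-- CES production function `f(K,X)` (Cobb–Douglas when `ρ = 1`). -/
noncomputable def cesf (A a ρ : ℝ) (K X : ℝ) : ℝ :=
  if ρ = 1 then A * K ^ a * X ^ (1 - a)
  else A * (a * K ^ (1 - ρ) + (1 - a) * X ^ (1 - ρ)) ^ (1 / (1 - ρ))

/-- `F(K,X) = f(K,X) + (1−δ)K`. -/
noncomputable def cesF (A a ρ δ : ℝ) (K X : ℝ) : ℝ := cesf A a ρ K X + (1 - δ) * K

/-- Marginal product of capital `F_K(K,1)`. -/
noncomputable def cesFK (A a ρ δ : ℝ) (K : ℝ) : ℝ := deriv (fun k => cesF A a ρ δ k 1) K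

/-- Marginal product of land `F_X(K,1)`. -/
noncomputable def cesFX (A a ρ δ : ℝ) (K : ℝ) : ℝ := deriv (fun x => cesF A a ρ δ K x) 1

/-- `k ↦ log(F_X(e^k,1)/F_K(e^k,1))`, whose derivative is the reciprocal of the
elasticity of substitution. -/
noncomputable def cesLogRatio (A a ρ δ : ℝ) (k : ℝ) : ℝ :=
  Real.log (cesFX A a ρ δ (Real.exp k) / cesFK A a ρ δ (Real.exp k))

/-- Elasticity of substitution `σ(K,1)`, the reciprocal of the derivative of the
log marginal-rate-of-substitution along `X = 1`. -/
noncomputable def cesSigma (A a ρ δ : ℝ) (K : ℝ) : ℝ :=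
  (deriv (cesLogRatio A a ρ δ) (Real.log K))⁻¹

/-!
Put `K = e^k` and `g(k) = log (f(e^k, 1) / A)`, so that `s = g'` is the capital share
`K f_K / f`. Both marginal products are powers of output: `f_X(e^k, 1) = A (1 - α) e^{ρ g}` and
`f_K(e^k, 1) = A α e^{ρ (g - k)}`. Hence
`log (F_X / F_K) = log (A (1 - α)) + ρ g - log (f_K + 1 - δ)` has derivative
`ρ (s + (1 - s) f_K / (f_K + 1 - δ))`. As `k → ∞` the share `s` tends to `1`, `α` or `0`
according as `ρ < 1`, `ρ = 1` or `ρ > 1`, and the second term vanishes: for `ρ < 1` because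
`1 - s → 0`, for `ρ ≥ 1` because `f_K → 0`.
-/

section

open Real Set

variable {A a ρ δ : ℝ}

/-- `g(k) = log (f(e^k, 1) / A)`. -/
noncomputable def cesLogOutput (a ρ k : ℝ) : ℝ :=
  if ρ = 1 then a * k else log (a * exp ((1 - ρ) * k) + (1 - a)) / (1 - ρ)

/-- The capital share `K f_K / f` at `K = e^k`, `X = 1`. -/
noncomputable def cesCapitalShare (a ρ k : ℝ) : ℝ :=
  a * exp ((1 - ρ) * k) / (a * exp ((1 - ρ) * k) + (1 - a))

/-- The marginal product `f_K(e^k, 1)`. -/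
noncomputable def cesMPK (A a ρ k : ℝ) : ℝ :=
  A * a * exp (ρ * (cesLogOutput a ρ k - k))

lemma weighted_exp_add_pos (ha₀ : 0 ≤ a) (ha₁ : a ≤ 1) (x : ℝ) :
    0 < a * exp x + (1 - a) := by
  nlinarith [exp_pos x, mul_nonneg ha₀ (exp_pos x).le,
    mul_nonneg (sub_nonneg.2 ha₁) (exp_pos x).le]

lemma exp_rpow_eq_exp_mul (k p : ℝ) : exp k ^ p = exp (p * k) := by
  rw [← exp_mul, mul_comm]

lemma cesLogOutput_one (a : ℝ) : cesLogOutput a 1 = fun k => a * k :=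
  funext fun _ => if_pos rfl

lemma cesLogOutput_of_ne_one (hρ : ρ ≠ 1) :
    cesLogOutput a ρ = fun k => log (a * exp ((1 - ρ) * k) + (1 - a)) / (1 - ρ) :=
  funext fun _ => if_neg hρ

lemma cesCapitalShare_one (a : ℝ) : cesCapitalShare a 1 = fun _ => a := by
  funext k
  simp [cesCapitalShare]

lemma cesCapitalShare_nonneg (ha₀ : 0 ≤ a) (ha₁ : a ≤ 1) (k : ℝ) :
    0 ≤ cesCapitalShare a ρ k :=
  div_nonneg (by positivity) (weighted_exp_add_pos ha₀ ha₁ _).le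

lemma cesCapitalShare_le_one (ha₀ : 0 ≤ a) (ha₁ : a ≤ 1) (k : ℝ) :
    cesCapitalShare a ρ k ≤ 1 :=
  div_le_one_of_le₀ (by linarith) (weighted_exp_add_pos ha₀ ha₁ _).le

lemma cesMPK_nonneg (hA : 0 ≤ A) (ha : 0 ≤ a) (k : ℝ) : 0 ≤ cesMPK A a ρ k := by
  unfold cesMPK
  positivity

lemma hasDerivAt_cesLogOutput (ha₀ : 0 ≤ a) (ha₁ : a ≤ 1) (k : ℝ) :
    HasDerivAt (cesLogOutput a ρ) (cesCapitalShare a ρ k) k := by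
  rcases eq_or_ne ρ 1 with rfl | hρ
  · simpa [cesLogOutput_one, cesCapitalShare_one] using (hasDerivAt_id k).const_mul a
  have hG : HasDerivAt (fun x => a * exp ((1 - ρ) * x) + (1 - a))
      (a * (exp ((1 - ρ) * k) * (1 - ρ))) k :=
    ((((hasDerivAt_id k).const_mul (1 - ρ)).exp).const_mul a).add_const _ |>.congr_deriv (by simp)
  rw [cesLogOutput_of_ne_one hρ]
  refine ((hG.log (weighted_exp_add_pos ha₀ ha₁ _).ne').div_const (1 - ρ)).congr_deriv ?_
  rw [cesCapitalShare]
  field_simp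

lemma hasDerivAt_cesF_fst (ha₀ : 0 ≤ a) (ha₁ : a ≤ 1) (k : ℝ) :
    HasDerivAt (fun K => cesF A a ρ δ K 1) (cesMPK A a ρ k + (1 - δ)) (exp k) := by
  show HasDerivAt (fun K => cesf A a ρ K 1 + (1 - δ) * K) _ _
  refine HasDerivAt.add ?_ ((hasDerivAt_id _).const_mul (1 - δ) |>.congr_deriv (by simp))
  rcases eq_or_ne ρ 1 with rfl | hρ
  · simp only [cesf, if_true, one_rpow, mul_one]
    refine ((hasDerivAt_rpow_const (Or.inl (exp_pos k).ne')).const_mul A).congr_deriv ?_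
    rw [cesMPK, cesLogOutput_one, exp_rpow_eq_exp_mul]
    ring_nf
  simp only [cesf, if_neg hρ, one_rpow, mul_one]
  have h1ρ : 1 - ρ ≠ 0 := sub_ne_zero.2 hρ.symm
  set G := a * exp ((1 - ρ) * k) + (1 - a) with hG_def
  have hG : 0 < G := weighted_exp_add_pos ha₀ ha₁ _
  have hGK : a * exp k ^ (1 - ρ) + (1 - a) ≠ 0 := by rw [exp_rpow_eq_exp_mul]; exact hG.ne'
  have hpow := (hasDerivAt_rpow_const (p := 1 - ρ) (Or.inl (exp_pos k).ne')).const_mul a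
  refine (((hpow.add_const (1 - a)).rpow_const (Or.inl hGK)).const_mul A).congr_deriv ?_
  have hexp : ρ * (log G / (1 - ρ) - k) = log G * (1 / (1 - ρ) - 1) + (1 - ρ - 1) * k := by
    field_simp
    ring
  rw [cesMPK, cesLogOutput_of_ne_one hρ, exp_rpow_eq_exp_mul, exp_rpow_eq_exp_mul, ← hG_def,
    rpow_def_of_pos hG, hexp, exp_add]
  field_simp

lemma hasDerivAt_cesF_snd (ha₀ : 0 ≤ a) (ha₁ : a ≤ 1) (k : ℝ) :
    HasDerivAt (fun X => cesF A a ρ δ (exp k) X)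
      (A * (1 - a) * exp (ρ * cesLogOutput a ρ k)) 1 := by
  refine HasDerivAt.add_const ((1 - δ) * exp k) ?_
  show HasDerivAt (fun X => cesf A a ρ (exp k) X) _ _
  rcases eq_or_ne ρ 1 with rfl | hρ
  · simp only [cesf, if_true]
    refine ((hasDerivAt_rpow_const (Or.inl one_ne_zero)).const_mul (A * exp k ^ a)).congr_deriv ?_
    rw [cesLogOutput_one, exp_rpow_eq_exp_mul, one_rpow]
    ring_nf
  simp only [cesf, if_neg hρ]
  have h1ρ : 1 - ρ ≠ 0 := sub_ne_zero.2 hρ.symm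
  set G := a * exp ((1 - ρ) * k) + (1 - a) with hG_def
  have hG : 0 < G := weighted_exp_add_pos ha₀ ha₁ _
  have hGK : a * exp k ^ (1 - ρ) + (1 - a) * 1 ^ (1 - ρ) ≠ 0 := by
    rw [exp_rpow_eq_exp_mul, one_rpow, mul_one]
    exact hG.ne'
  have hpow := (hasDerivAt_rpow_const (p := 1 - ρ) (Or.inl one_ne_zero)).const_mul (1 - a)
  refine (((hpow.const_add (a * exp k ^ (1 - ρ))).rpow_const (Or.inl hGK)).const_mul A
    ).congr_deriv ?_
  have hexp : log G * (1 / (1 - ρ) - 1) = ρ * (log G / (1 - ρ)) := by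
    field_simp
    ring
  simp only [cesLogOutput_of_ne_one hρ, exp_rpow_eq_exp_mul, one_rpow, mul_one, ← hG_def]
  rw [rpow_def_of_pos hG, hexp]
  field_simp

lemma hasDerivAt_log_mrs {g : ℝ → ℝ} {g' k B C c : ℝ} (ρ : ℝ) (hg : HasDerivAt g g' k)
    (hB : 0 < B) (hC : 0 ≤ C) (hc : 0 < c) :
    HasDerivAt (fun x => log (B * exp (ρ * g x) / (C * exp (ρ * (g x - x)) + c)))
      (ρ * (g' + (1 - g') * (C * exp (ρ * (g k - k)) / (C * exp (ρ * (g k - k)) + c)))) k := by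
  have hN := ((hg.const_mul ρ).exp).const_mul B
  have hD := ((((hg.sub (hasDerivAt_id k)).const_mul ρ).exp).const_mul C).add_const c
  have hDpos : 0 < C * exp (ρ * (g k - k)) + c := by positivity
  refine ((hN.div hD hDpos.ne').log (div_pos (by positivity) hDpos).ne').congr_deriv ?_
  simp only [Pi.div_apply, Pi.sub_apply, id_eq]
  field_simp
  ring

lemma hasDerivAt_cesLogRatio (hA : 0 < A) (ha : a ∈ Ioo 0 1) (hδ : δ < 1) (k : ℝ) :
    HasDerivAt (cesLogRatio A a ρ δ) (ρ * (cesCapitalShare a ρ k +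
      (1 - cesCapitalShare a ρ k) * (cesMPK A a ρ k / (cesMPK A a ρ k + (1 - δ))))) k := by
  have hratio : cesLogRatio A a ρ δ = fun k => log (A * (1 - a) * exp (ρ * cesLogOutput a ρ k) /
      (A * a * exp (ρ * (cesLogOutput a ρ k - k)) + (1 - δ))) := by
    funext k
    rw [cesLogRatio, cesFX, cesFK, (hasDerivAt_cesF_snd ha.1.le ha.2.le k).deriv,
      (hasDerivAt_cesF_fst ha.1.le ha.2.le k).deriv, cesMPK]
  rw [hratio]
  exact hasDerivAt_log_mrs ρ (hasDerivAt_cesLogOutput ha.1.le ha.2.le k)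
    (mul_pos hA (sub_pos.2 ha.2)) (mul_pos hA ha.1).le (sub_pos.2 hδ)

lemma tendsto_cesCapitalShare_of_lt_one (ha : 0 < a) (hρ : ρ < 1) :
    Tendsto (cesCapitalShare a ρ) atTop (𝓝 1) := by
  have hE : Tendsto (fun k => exp (-((1 - ρ) * k))) atTop (𝓝 0) :=
    tendsto_exp_neg_atTop_nhds_zero.comp (tendsto_id.const_mul_atTop (sub_pos.2 hρ))
  have hshare : cesCapitalShare a ρ = fun k => a / (a + (1 - a) * exp (-((1 - ρ) * k))) := by
    funext k
    rw [cesCapitalShare, exp_neg]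
    field_simp
  rw [hshare]
  have h := (tendsto_const_nhds (x := a)).div (tendsto_const_nhds.add (hE.const_mul (1 - a)))
    (by simpa using ha.ne')
  rwa [mul_zero, add_zero, div_self ha.ne'] at h

lemma tendsto_cesCapitalShare_of_one_lt (ha : a < 1) (hρ : 1 < ρ) :
    Tendsto (cesCapitalShare a ρ) atTop (𝓝 0) := by
  have hE : Tendsto (fun k => exp ((1 - ρ) * k)) atTop (𝓝 0) :=
    tendsto_exp_comp_nhds_zero.2 (tendsto_id.const_mul_atTop_of_neg (by linarith))
  unfold cesCapitalShare
  simpa [Pi.div_def] using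
    (hE.const_mul a).div ((hE.const_mul a).add_const (1 - a)) (by simpa using (sub_pos.2 ha).ne')

lemma tendsto_cesLogOutput_sub_atBot (ha : a ∈ Ioo 0 1) (hρ : 1 ≤ ρ) :
    Tendsto (fun k => cesLogOutput a ρ k - k) atTop atBot := by
  rcases hρ.eq_or_lt with rfl | hρ
  · refine (tendsto_id.const_mul_atTop_of_neg (sub_neg.2 ha.2)).congr fun k => ?_
    simp only [cesLogOutput_one, id_eq]
    ring
  have hE : Tendsto (fun k => exp ((1 - ρ) * k)) atTop (𝓝 0) :=
    tendsto_exp_comp_nhds_zero.2 (tendsto_id.const_mul_atTop_of_neg (by linarith))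
  have hG : Tendsto (fun k => log (a * exp ((1 - ρ) * k) + (1 - a))) atTop
      (𝓝 (log (1 - a))) := by
    simpa using ((hE.const_mul a).add_const (1 - a)).log (by simpa using (sub_pos.2 ha.2).ne')
  rw [cesLogOutput_of_ne_one hρ.ne']
  exact (hG.div_const (1 - ρ)).add_atBot tendsto_neg_atTop_atBot

lemma tendsto_cesMPK_of_one_le (ha : a ∈ Ioo 0 1) (hρ : 1 ≤ ρ) :
    Tendsto (cesMPK A a ρ) atTop (𝓝 0) := by
  unfold cesMPK
  simpa using (tendsto_exp_comp_nhds_zero.2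
    ((tendsto_cesLogOutput_sub_atBot ha hρ).const_mul_atBot (by linarith))).const_mul (A * a)

lemma tendsto_one_sub_cesCapitalShare_mul (hA : 0 < A) (ha : a ∈ Ioo 0 1) (hδ : δ < 1) :
    Tendsto (fun k => (1 - cesCapitalShare a ρ k) *
      (cesMPK A a ρ k / (cesMPK A a ρ k + (1 - δ)))) atTop (𝓝 0) := by
  have hc : 0 < 1 - δ := sub_pos.2 hδ
  have hs₀ := cesCapitalShare_nonneg (ρ := ρ) ha.1.le ha.2.le
  have hs₁ := cesCapitalShare_le_one (ρ := ρ) ha.1.le ha.2.le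
  have hm₀ := cesMPK_nonneg (ρ := ρ) hA.le ha.1.le
  have hw₀ k : 0 ≤ cesMPK A a ρ k / (cesMPK A a ρ k + (1 - δ)) :=
    div_nonneg (hm₀ k) (by linarith [hm₀ k])
  have hw₁ k : cesMPK A a ρ k / (cesMPK A a ρ k + (1 - δ)) ≤ 1 :=
    div_le_one_of_le₀ (by linarith) (by linarith [hm₀ k])
  have hprod₀ k := mul_nonneg (sub_nonneg.2 (hs₁ k)) (hw₀ k)
  rcases lt_or_ge ρ 1 with hρ | hρ
  · refine squeeze_zero hprod₀
      (fun k => mul_le_of_le_one_right (sub_nonneg.2 (hs₁ k)) (hw₁ k)) ?_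
    simpa using (tendsto_cesCapitalShare_of_lt_one ha.1 hρ).const_sub 1
  · refine squeeze_zero hprod₀
      (fun k => mul_le_of_le_one_left (hw₀ k) (by linarith [hs₀ k])) ?_
    have hm := tendsto_cesMPK_of_one_le (A := A) ha hρ
    simpa [Pi.div_def] using hm.div (hm.add_const (1 - δ)) (by simpa using hc.ne')

lemma tendsto_deriv_cesLogRatio (hA : 0 < A) (ha : a ∈ Ioo 0 1) (hδ : δ < 1) {L : ℝ}
    (hs : Tendsto (cesCapitalShare a ρ) atTop (𝓝 L)) :
    Tendsto (deriv (cesLogRatio A a ρ δ)) atTop (𝓝 (ρ * L)) := by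
  have h := (hs.add (tendsto_one_sub_cesCapitalShare_mul (ρ := ρ) hA ha hδ)).const_mul ρ
  rw [add_zero] at h
  exact h.congr fun k => (hasDerivAt_cesLogRatio hA ha hδ k).deriv.symm

lemma deriv_cesLogRatio_pos (hA : 0 < A) (ha : a ∈ Ioo 0 1) (hδ : δ < 1) (hρ : 0 < ρ)
    (k : ℝ) :
    0 < deriv (cesLogRatio A a ρ δ) k := by
  have hs : 0 < cesCapitalShare a ρ k :=
    div_pos (mul_pos ha.1 (exp_pos _)) (weighted_exp_add_pos ha.1.le ha.2.le _)
  have hm := cesMPK_nonneg (ρ := ρ) hA.le ha.1.le k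
  have hrest := mul_nonneg (sub_nonneg.2 (cesCapitalShare_le_one (ρ := ρ) ha.1.le ha.2.le k))
    (div_nonneg hm (by linarith : 0 ≤ cesMPK A a ρ k + (1 - δ)))
  rw [(hasDerivAt_cesLogRatio hA ha hδ k).deriv]
  exact mul_pos hρ (add_pos_of_pos_of_nonneg hs hrest)

end

/-- **Elasticity Lemma, CES part.** For the CES production function,
`lim_{k→∞} d/dk log(F_X(e^k,1)/F_K(e^k,1))` equals `ρ` if `ρ < 1`, `α` if `ρ = 1`, and
`0` if `ρ > 1`; equivalently, `σ(K,1) → 1/ρ`, `1/α`, `∞`, respectively, as `K → ∞`. -/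
theorem elasticity_lemma_CES (A a ρ δ : ℝ) (hA : 0 < A) (ha : a ∈ Set.Ioo (0 : ℝ) 1)
    (hρ : 0 < ρ) (hδ : δ ∈ Set.Ioo (0 : ℝ) 1) :
    ((ρ < 1 → Tendsto (fun k => deriv (cesLogRatio A a ρ δ) k) atTop (𝓝 ρ)) ∧
     (ρ = 1 → Tendsto (fun k => deriv (cesLogRatio A a ρ δ) k) atTop (𝓝 a)) ∧
     (1 < ρ → Tendsto (fun k => deriv (cesLogRatio A a ρ δ) k) atTop (𝓝 0))) ∧
    ((ρ < 1 → Tendsto (fun K => cesSigma A a ρ δ K) atTop (𝓝 (1 / ρ))) ∧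
     (ρ = 1 → Tendsto (fun K => cesSigma A a ρ δ K) atTop (𝓝 (1 / a))) ∧
     (1 < ρ → Tendsto (fun K => cesSigma A a ρ δ K) atTop atTop)) := by
  have hlt (h : ρ < 1) : Tendsto (deriv (cesLogRatio A a ρ δ)) atTop (𝓝 ρ) := by
    simpa using tendsto_deriv_cesLogRatio hA ha hδ.2 (tendsto_cesCapitalShare_of_lt_one ha.1 h)
  have heq (h : ρ = 1) : Tendsto (deriv (cesLogRatio A a ρ δ)) atTop (𝓝 a) := by
    subst h
    simpa using tendsto_deriv_cesLogRatio (ρ := 1) hA ha hδ.2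
      (by rw [cesCapitalShare_one]; exact tendsto_const_nhds)
  have hgt (h : 1 < ρ) : Tendsto (deriv (cesLogRatio A a ρ δ)) atTop (𝓝 0) := by
    simpa using tendsto_deriv_cesLogRatio hA ha hδ.2 (tendsto_cesCapitalShare_of_one_lt ha.2 h)
  refine ⟨⟨hlt, heq, hgt⟩, fun h => ?_, fun h => ?_, fun h => ?_⟩
  · rw [one_div]
    exact ((hlt h).comp Real.tendsto_log_atTop).inv₀ hρ.ne'
  · rw [one_div]
    exact ((heq h).comp Real.tendsto_log_atTop).inv₀ ha.1.ne'
  · have hD := (hgt h).comp Real.tendsto_log_atTop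
    have hpos : ∀ᶠ K in atTop, 0 < deriv (cesLogRatio A a ρ δ) (Real.log K) :=
      Eventually.of_forall fun K => deriv_cesLogRatio_pos hA ha hδ.2 hρ _
    exact (tendsto_nhdsWithin_of_tendsto_nhds_of_eventually_within _ hD hpos
      ).inv_tendsto_nhdsGT_zero
end

section
/- Given initial aggregate capital K_0 > 0, a tuple of sequences (R_t, z̄_t, W_t, K_{t+1}, P_t)_{t≥0} is a rational expectations equilibrium — i.e., satisfies for all t: R_t = (P_{t+1} + F_X(K_{t+1},1))/P_t; z̄_t = R_t/F_K(K_{t+1},1) with Φ(z̄_t) > 1 − 1/λ; W_t = F(K_t,1) + P_t; K_{t+1} = βλ·W_t·∫_{z̄_t}^∞ z dΦ(z); and P_t = β·W_t·(λΦ(z̄_t) + 1 − λ) — if and only if W_t = W(K_t, z̄_t), P_t = P(K_t, z̄_t), R_t = z̄_t·F_K(K_{t+1},1), and the pair (K_t, z̄_t) follows the equilibrium dynamics. (Proposition 1: reduction of the equilibrium to a two-dimensional dynamics.) -/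
open Filter Topology MeasureTheory

/-- **Assumption 1.** `Φ` (the law `μ` of productivity) is an absolutely continuous
cdf on `[0,∞)` with `Φ(z) < 1` for all `z` and a finite mean. -/
structure Assumption1 (μ : Measure ℝ) : Prop where
  prob : IsProbabilityMeasure μ
  supp : μ (Set.Iio 0) = 0
  absCont : μ ≪ MeasureTheory.volume
  lt_one : ∀ z : ℝ, μ (Set.Iic z) < 1
  finite_mean : Integrable id μ

/-- The cdf `Φ` of the productivity distribution `μ`. -/
noncomputable def Phi (μ : Measure ℝ) (z : ℝ) : ℝ := (μ (Set.Iic z)).toReal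

/-- **Assumption 2.** `F` is homogeneous of degree one, concave, continuously
differentiable with positive marginal products `FK`, `FX`, and
`F(K,1)/K → m`, `F_K(K,1) → m` as `K → ∞` with `m > 0`. -/
structure Assumption2 (F FK FX : ℝ → ℝ → ℝ) (m : ℝ) : Prop where
  pos : ∀ K X : ℝ, 0 < K → 0 < X → 0 < F K X
  homog : ∀ c K X : ℝ, 0 < c → 0 < K → 0 < X → F (c * K) (c * X) = c * F K X
  concave : ConcaveOn ℝ (Set.Ioi 0 ×ˢ Set.Ioi 0) (fun p : ℝ × ℝ => F p.1 p.2)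
  hFK : ∀ K X : ℝ, 0 < K → 0 < X → HasDerivAt (fun k => F k X) (FK K X) K
  hFX : ∀ K X : ℝ, 0 < K → 0 < X → HasDerivAt (fun x => F K x) (FX K X) X
  FK_pos : ∀ K X : ℝ, 0 < K → 0 < X → 0 < FK K X
  FX_pos : ∀ K X : ℝ, 0 < K → 0 < X → 0 < FX K X
  FK_cont : ContinuousOn (fun p : ℝ × ℝ => FK p.1 p.2) (Set.Ioi 0 ×ˢ Set.Ioi 0)
  FX_cont : ContinuousOn (fun p : ℝ × ℝ => FX p.1 p.2) (Set.Ioi 0 ×ˢ Set.Ioi 0)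
  m_pos : 0 < m
  lim_avg : Filter.Tendsto (fun K => F K 1 / K) Filter.atTop (nhds m)
  lim_FK : Filter.Tendsto (fun K => FK K 1) Filter.atTop (nhds m)

/-- Aggregate wealth `W(K, z̄)` as a function of capital and the investment threshold. -/
noncomputable def Wfun (μ : Measure ℝ) (β lam : ℝ) (F : ℝ → ℝ → ℝ) (K zb : ℝ) : ℝ :=
  F K 1 / (1 - β * (lam * Phi μ zb + 1 - lam))

/-- Land price `P(K, z̄)` as a function of capital and the investment threshold. -/
noncomputable def Pfun (μ : Measure ℝ) (β lam : ℝ) (F : ℝ → ℝ → ℝ) (K zb : ℝ) : ℝ :=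
  β * (lam * Phi μ zb + 1 - lam) * F K 1 / (1 - β * (lam * Phi μ zb + 1 - lam))

/-- **Proposition 1.** Reduction of the rational expectations equilibrium to a
two-dimensional dynamics in `(K_t, z̄_t)`. -/
theorem prop1_reduction
    (μ : Measure ℝ) (hμ : Assumption1 μ)
    (F FK FX : ℝ → ℝ → ℝ) (m : ℝ) (hF : Assumption2 F FK FX m)
    (β lam : ℝ) (hβ : β ∈ Set.Ioo (0 : ℝ) 1) (hlam : 1 ≤ lam)
    (K0 : ℝ) (hK0 : 0 < K0)
    (R zb W K P : ℕ → ℝ) (hKinit : K 0 = K0)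
    (hKpos : ∀ t, 0 < K t) (hPpos : ∀ t, 0 < P t) :
    ((∀ t, R t = (P (t + 1) + FX (K (t + 1)) 1) / P t) ∧
     (∀ t, 1 - 1 / lam < Phi μ (zb t) ∧ zb t = R t / FK (K (t + 1)) 1) ∧
     (∀ t, W t = F (K t) 1 + P t) ∧
     (∀ t, K (t + 1) = β * lam * W t * ∫ z in Set.Ioi (zb t), z ∂μ) ∧
     (∀ t, P t = β * W t * (lam * Phi μ (zb t) + 1 - lam)))
    ↔
    ((∀ t, 1 - 1 / lam < Phi μ (zb t)) ∧
     (∀ t, W t = Wfun μ β lam F (K t) (zb t)) ∧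
     (∀ t, P t = Pfun μ β lam F (K t) (zb t)) ∧
     (∀ t, R t = zb t * FK (K (t + 1)) 1) ∧
     (∀ t, K (t + 1) = β * lam * Wfun μ β lam F (K t) (zb t) * ∫ z in Set.Ioi (zb t), z ∂μ) ∧
     (∀ t, zb t = (Pfun μ β lam F (K (t + 1)) (zb (t + 1)) + FX (K (t + 1)) 1) /
        (FK (K (t + 1)) 1 * Pfun μ β lam F (K t) (zb t)))) := by

  obtain ⟨hβ0, hβ1⟩ := hβ
  have hlam0 : (0:ℝ) < lam := lt_of_lt_of_le one_pos hlam
  have hPhi : ∀ z : ℝ, Phi μ z < 1 := by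
    intro z
    have h := hμ.lt_one z
    have hne : μ (Set.Iic z) ≠ ⊤ := (lt_of_lt_of_le h le_top).ne
    have := (ENNReal.toReal_lt_toReal hne ENNReal.one_ne_top).mpr h
    simpa [Phi] using this
  have hD : ∀ z : ℝ, 0 < 1 - β * (lam * Phi μ z + 1 - lam) := by
    intro z
    have h1 := hPhi z
    nlinarith [mul_pos hβ0 (mul_pos hlam0 (sub_pos.mpr h1))]
  have hFKpos : ∀ t : ℕ, 0 < FK (K (t+1)) 1 := fun t => hF.FK_pos _ _ (hKpos (t+1)) one_pos
  constructor
  · rintro ⟨hR, hzb, hW, hK, hP⟩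
    have hWeq : ∀ t, W t = Wfun μ β lam F (K t) (zb t) := by
      intro t
      have h1 := hW t; have h2 := hP t
      have hd := hD (zb t)
      rw [Wfun, eq_div_iff hd.ne']
      linear_combination h1 + h2
    have hPeq : ∀ t, P t = Pfun μ β lam F (K t) (zb t) := by
      intro t
      have h2 := hP t
      have hd := hD (zb t)
      rw [hWeq t, Wfun] at h2
      rw [Pfun, h2]
      field_simp
    have hReq : ∀ t, R t = zb t * FK (K (t+1)) 1 := by
      intro t
      have h := (hzb t).2
      rw [h, div_mul_cancel₀ _ (hFKpos t).ne']
    refine ⟨fun t => (hzb t).1, hWeq, hPeq, hReq, fun t => by rw [← hWeq t]; exact hK t, ?_⟩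
    intro t
    conv_lhs => rw [(hzb t).2, hR t, hPeq t, hPeq (t+1)]
    rw [div_div, mul_comm]
  · rintro ⟨hΦ, hWe, hPe, hRe, hKe, hze⟩
    have hPfpos : ∀ t, 0 < Pfun μ β lam F (K t) (zb t) := fun t => hPe t ▸ hPpos t
    refine ⟨?_, fun t => ⟨hΦ t, ?_⟩, ?_, fun t => by rw [hWe t]; exact hKe t, ?_⟩
    · intro t
      rw [hRe t, hze t, hPe t, hPe (t+1)]
      field_simp [(hFKpos t).ne', (hPfpos t).ne']
    · rw [hRe t, mul_div_cancel_right₀ _ (hFKpos t).ne']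
    · intro t
      rw [hWe t, hPe t, Wfun, Pfun]
      have hd := hD (zb t)
      field_simp
      ring
    · intro t
      rw [hPe t, hWe t, Wfun, Pfun]
      ring
end

section
/- Suppose Assumptions 1 and 2 hold, β ∈ (0,1), λ ≥ 1, λ < λ̄, and additionally lim_{K→0⁺} F(K,1)/K = ∞ (Inada condition at zero). Then for every z̄ with Φ(z̄) > 1 − 1/λ, there exists a unique K > 0 satisfying K·(1 − β(λΦ(z̄) + 1 − λ)) = βλ·F(K,1)·∫_{z̄}^∞ z dΦ(z). (Lemma: unique steady-state capital for each investment threshold.) -/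
open Filter Topology MeasureTheory

/-- The leverage threshold `λ̄ = ((1−β)/β)·(∫ max{mz−1, 0} dΦ(z))⁻¹`. -/
noncomputable def lamBar (β m : ℝ) (μ : Measure ℝ) : ℝ :=
  ((1 - β) / β) * (∫ z, max (m * z - 1) 0 ∂μ)⁻¹

/-!
Dividing the steady-state equation by `K` and by `d = βλ ∫_{z̄}^∞ z dΦ > 0`, it says that the
average product `F(K,1)/K` equals `T = (1 − β(λΦ(z̄) + 1 − λ)) / d`. By homogeneity
`F(K,1)/K = F(1, 1/K)`, which is continuous and strictly decreasing in `K`, tends to `∞` as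
`K → 0⁺` (Inada) and to `m` as `K → ∞`; so the equation has exactly one solution once `m < T`.
That inequality is where `λ < λ̄` enters: `m z ≤ max (m z − 1) 0 + 1` integrated over `z > z̄`
gives `m ∫_{z̄}^∞ z dΦ ≤ ∫ max (m z − 1) 0 dΦ + 1 − Φ(z̄)`, and `βλ ∫ max (m z − 1) 0 dΦ < 1 − β`.
-/

open Set

theorem existsUnique_pos_eq_of_strictAntiOn {g : ℝ → ℝ} {m T : ℝ}
    (hcont : ContinuousOn g (Ioi 0)) (hanti : StrictAntiOn g (Ioi 0))
    (hzero : Tendsto g (𝓝[>] 0) atTop) (htop : Tendsto g atTop (𝓝 m)) (hT : m < T) :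
    ∃! K, 0 < K ∧ g K = T := by
  obtain ⟨a, haT, ha⟩ :=
    ((hzero.eventually (eventually_gt_atTop T)).and self_mem_nhdsWithin).exists
  obtain ⟨b, hbT, hab⟩ := ((htop.eventually_lt_const hT).and (eventually_ge_atTop a)).exists
  have hsub : Icc a b ⊆ Ioi 0 := fun x hx => lt_of_lt_of_le ha hx.1
  obtain ⟨K, hK, hgK⟩ :=
    intermediate_value_Icc' hab (hcont.mono hsub) ⟨hbT.le, haT.le⟩
  exact ⟨K, ⟨hsub hK, hgK⟩, fun K' ⟨hK', hgK'⟩ =>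
    hanti.injOn hK' (hsub hK) (hgK'.trans hgK.symm)⟩

namespace Assumption2

variable {F FK FX : ℝ → ℝ → ℝ} {m : ℝ}

theorem div_self_eq (hF : Assumption2 F FK FX m) {K : ℝ} (hK : 0 < K) :
    F K 1 / K = F 1 K⁻¹ := by
  have h := hF.homog K 1 K⁻¹ hK one_pos (inv_pos.2 hK)
  rw [mul_one, mul_inv_cancel₀ hK.ne'] at h
  rw [h, mul_div_cancel_left₀ _ hK.ne']

theorem strictMonoOn_one (hF : Assumption2 F FK FX m) : StrictMonoOn (F 1) (Ioi 0) := by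
  refine strictMonoOn_of_hasDerivWithinAt_pos (convex_Ioi 0)
    (fun x hx => (hF.hFX 1 x one_pos hx).continuousAt.continuousWithinAt) (f' := FX 1)
    (fun x hx => ?_) fun x hx => ?_
  all_goals rw [interior_Ioi] at hx
  · exact (hF.hFX 1 x one_pos hx).hasDerivWithinAt
  · exact hF.FX_pos 1 x one_pos hx

theorem strictAntiOn_div_self (hF : Assumption2 F FK FX m) :
    StrictAntiOn (fun K => F K 1 / K) (Ioi 0) := by
  intro K₁ (hK₁ : 0 < K₁) K₂ (hK₂ : 0 < K₂) h
  simp only [hF.div_self_eq hK₁, hF.div_self_eq hK₂]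
  exact hF.strictMonoOn_one (inv_pos.2 hK₂) (inv_pos.2 hK₁) (inv_strictAnti₀ hK₁ h)

theorem continuousOn_div_self (hF : Assumption2 F FK FX m) :
    ContinuousOn (fun K => F K 1 / K) (Ioi 0) :=
  ContinuousOn.div (fun K hK => (hF.hFK K 1 hK one_pos).continuousAt.continuousWithinAt)
    continuousOn_id fun _ hK => ne_of_gt hK

end Assumption2

section Productivity

variable {μ : Measure ℝ}

theorem measureReal_Ioi_eq_one_sub_Phi [IsProbabilityMeasure μ] (z : ℝ) :
    μ.real (Ioi z) = 1 - Phi μ z := by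
  rw [← compl_Iic, probReal_compl_eq_one_sub measurableSet_Iic]
  rfl

theorem mul_setIntegral_Ioi_sub_le [IsProbabilityMeasure μ] (hμ : Integrable id μ) (m zb : ℝ) :
    m * ∫ z in Ioi zb, z ∂μ - (1 - Phi μ zb) ≤ ∫ z, max (m * z - 1) 0 ∂μ := by
  have hid : Integrable (fun z : ℝ => z) μ := hμ
  have hlin : Integrable (fun z => m * z - 1) μ := (hid.const_mul m).sub (integrable_const 1)
  calc m * ∫ z in Ioi zb, z ∂μ - (1 - Phi μ zb)
      = ∫ z in Ioi zb, (m * z - 1) ∂μ := by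
        rw [integral_sub (hid.const_mul m).integrableOn (integrable_const 1).integrableOn,
          integral_const_mul, setIntegral_const, measureReal_Ioi_eq_one_sub_Phi, smul_eq_mul,
          mul_one]
    _ ≤ ∫ z in Ioi zb, max (m * z - 1) 0 ∂μ :=
        setIntegral_mono hlin.integrableOn hlin.pos_part.integrableOn fun _ => le_max_left _ _
    _ ≤ ∫ z, max (m * z - 1) 0 ∂μ :=
        setIntegral_le_integral hlin.pos_part (Eventually.of_forall fun _ => le_max_right _ _)

theorem mul_integral_lt_of_lt_lamBar {β m lam : ℝ} (hβ : 0 < β) (hlam : 0 < lam)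
    (hlt : lam < lamBar β m μ) : β * lam * ∫ z, max (m * z - 1) 0 ∂μ < 1 - β := by
  rw [lamBar, ← div_eq_mul_inv] at hlt
  have hI : 0 ≤ ∫ z, max (m * z - 1) 0 ∂μ := integral_nonneg fun z => le_max_right _ _
  rcases hI.eq_or_lt with hI | hI
  · -- `0⁻¹ = 0` makes `λ̄ = 0` here
    rw [← hI, div_zero] at hlt
    exact absurd hlam hlt.not_gt
  · have := (lt_div_iff₀ hβ).1 ((lt_div_iff₀ hI).1 hlt)
    linarith

namespace Assumption1

theorem measure_Ioi_pos (hμ : Assumption1 μ) (z : ℝ) : 0 < μ (Ioi z) := by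
  have := hμ.prob
  rw [← compl_Iic, prob_compl_eq_one_sub measurableSet_Iic]
  exact tsub_pos_of_lt (hμ.lt_one z)

theorem setIntegral_Ioi_pos (hμ : Assumption1 μ) (zb : ℝ) : 0 < ∫ z in Ioi zb, z ∂μ := by
  have := hμ.prob
  have hnonneg : ∀ᵐ z ∂μ, 0 ≤ z :=
    (measure_eq_zero_iff_ae_notMem.1 hμ.supp).mono fun _ hz => not_lt.1 hz
  set t := max zb 0 + 1
  have ht : 0 < t := by positivity
  have hmass : 0 < μ.real (Ioi t) :=
    ENNReal.toReal_pos (hμ.measure_Ioi_pos t).ne' (measure_ne_top μ _)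
  calc 0 < t * μ.real (Ioi t) := mul_pos ht hmass
    _ ≤ ∫ z in Ioi t, z ∂μ :=
        setIntegral_ge_of_const_le_real measurableSet_Ioi (measure_ne_top μ _)
          (fun _ hz => hz.le) hμ.finite_mean.integrableOn
    _ ≤ ∫ z in Ioi zb, z ∂μ :=
        setIntegral_mono_set hμ.finite_mean.integrableOn (ae_restrict_of_ae hnonneg)
          (Ioi_subset_Ioi (by linarith [le_max_left zb 0])).eventuallyLE

end Assumption1

end Productivity

/-- **Lemma (unique steady-state capital).** Under Assumptions 1 and 2, `β ∈ (0,1)`,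
`1 ≤ λ < λ̄`, and the Inada condition at zero, for every threshold `z̄` with
`Φ(z̄) > 1 − 1/λ` there is a unique `K > 0` solving the steady-state capital equation. -/
theorem unique_steady_state_capital
    (μ : Measure ℝ) (hμ : Assumption1 μ)
    (F FK FX : ℝ → ℝ → ℝ) (m : ℝ) (hF : Assumption2 F FK FX m)
    (β lam : ℝ) (hβ : β ∈ Set.Ioo (0 : ℝ) 1) (hlam : 1 ≤ lam)
    (hlt : lam < lamBar β m μ)
    (hInada : Tendsto (fun K => F K 1 / K) (nhdsWithin 0 (Set.Ioi 0)) atTop) :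
    ∀ zb : ℝ, 1 - 1 / lam < Phi μ zb →
      ∃! K : ℝ, 0 < K ∧
        K * (1 - β * (lam * Phi μ zb + 1 - lam)) =
          β * lam * F K 1 * ∫ z in Set.Ioi zb, z ∂μ := by
  intro zb _
  have := hμ.prob
  have hlam₀ : 0 < lam := one_pos.trans_le hlam
  set c := 1 - β * (lam * Phi μ zb + 1 - lam)
  set d := β * lam * ∫ z in Set.Ioi zb, z ∂μ
  have hd : 0 < d := mul_pos (mul_pos hβ.1 hlam₀) (hμ.setIntegral_Ioi_pos zb)
  have hmd : m * d < c := by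
    have := mul_le_mul_of_nonneg_left (mul_setIntegral_Ioi_sub_le hμ.finite_mean m zb)
      (mul_pos hβ.1 hlam₀).le
    linarith [mul_integral_lt_of_lt_lamBar hβ.1 hlam₀ hlt]
  have hunique := existsUnique_pos_eq_of_strictAntiOn hF.continuousOn_div_self
    hF.strictAntiOn_div_self hInada hF.lim_avg ((lt_div_iff₀ hd).2 hmd)
  refine (existsUnique_congr fun K => and_congr_right fun hK => ?_).1 hunique
  rw [div_eq_div_iff hK.ne' hd.ne']
  constructor <;> intro h <;> linear_combination -h
end

section
/- Suppose Assumption 1 holds, β ∈ (0,1), m > 0, and define Ψ(v,λ) = v·(1 − β(λΦ(v) + 1 − λ)) − βλ·∫_v^∞ z dΦ(z) for v > 0 and λ > 0. Then: (i) for each λ > 0 there exists a unique v(λ) > 0 with Ψ(v(λ), λ) = 0; (ii) the map λ ↦ v(λ) is strictly increasing; (iii) v(λ̄) = 1/m, so that m·v(λ) > 1 if and only if λ > λ̄. In particular, if λ > λ̄ there exists a unique growth rate G = m·v(λ) > 1 satisfying (G/m)·(1 − β(λΦ(G/m) + 1 − λ)) = βλ·∫_{G/m}^∞ z dΦ(z).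 (Proposition 2, part 2: unique long-run growth rate, exceeding 1 exactly above the leverage threshold.) -/
open Filter Topology MeasureTheory

/-- `Ψ(v, λ) = v·(1 − β(λΦ(v) + 1 − λ)) − βλ·∫_v^∞ z dΦ(z)`. -/
noncomputable def Psi (μ : Measure ℝ) (β : ℝ) (v lam : ℝ) : ℝ :=
  v * (1 - β * (lam * Phi μ v + 1 - lam)) - β * lam * ∫ z in Set.Ioi v, z ∂μ

/-!
With the stop-loss transform `g(v) = ∫ (z - v)⁺ dΦ(z)` one has `Ψ(v, λ) = (1 - β) v - β λ g(v)`.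
By Assumption 1, `g` is positive, antitone and 1-Lipschitz, so `Ψ(v, λ) = 0` says exactly
`λ = Λ(v) := (1 - β) v / (β g(v))`, and `Λ` is continuous, strictly increasing, vanishes at `0`
and grows at least linearly. Thus `Λ` maps `(0, ∞)` onto itself and `v(λ) = Λ⁻¹(λ)`; finally
`∫ (m z - 1)⁺ dΦ(z) = m g(1/m)` gives `λ̄ = Λ(1/m)`.
-/

open Set

noncomputable def stopLoss (μ : Measure ℝ) (v : ℝ) : ℝ := ∫ z, max (z - v) 0 ∂μ

section StopLoss

variable {μ : Measure ℝ}

lemma integrable_max_sub_zero [IsFiniteMeasure μ] (hμ : Integrable id μ) (v : ℝ) :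
    Integrable (fun z => max (z - v) 0) μ :=
  (hμ.sub (integrable_const v)).pos_part

lemma antitone_stopLoss [IsFiniteMeasure μ] (hμ : Integrable id μ) : Antitone (stopLoss μ) :=
  fun _ _ hab => integral_mono (integrable_max_sub_zero hμ _) (integrable_max_sub_zero hμ _)
    fun _ => max_le_max (by linarith) le_rfl

lemma stopLoss_le_add_dist [IsProbabilityMeasure μ] (hμ : Integrable id μ) (a b : ℝ) :
    stopLoss μ a ≤ stopLoss μ b + dist a b := by
  have hle : ∀ z, max (z - a) 0 ≤ max (z - b) 0 + dist a b := fun z => by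
    have := abs_sub_comm a b ▸ le_abs_self (b - a)
    rw [Real.dist_eq]
    exact max_le (by linarith [le_max_left (z - b) 0]) (by positivity)
  calc stopLoss μ a ≤ ∫ z, (max (z - b) 0 + dist a b) ∂μ :=
        integral_mono (integrable_max_sub_zero hμ a)
          ((integrable_max_sub_zero hμ b).add (integrable_const _)) hle
    _ = stopLoss μ b + dist a b := by
        rw [integral_add (integrable_max_sub_zero hμ b) (integrable_const _), integral_const,
          probReal_univ, one_smul, stopLoss]

lemma continuous_stopLoss [IsProbabilityMeasure μ] (hμ : Integrable id μ) :
    Continuous (stopLoss μ) :=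
  (LipschitzWith.of_le_add (stopLoss_le_add_dist hμ)).continuous

lemma stopLoss_pos_iff [IsFiniteMeasure μ] (hμ : Integrable id μ) (v : ℝ) :
    0 < stopLoss μ v ↔ 0 < μ (Ioi v) := by
  have hsupp : Function.support (fun z => max (z - v) 0) = Ioi v := by
    ext z; simp
  rw [stopLoss, integral_pos_iff_support_of_nonneg (f := fun z => max (z - v) 0)
    (fun _ => le_max_right _ _) (integrable_max_sub_zero hμ v), hsupp]

lemma stopLoss_eq_setIntegral_sub [IsProbabilityMeasure μ] (hμ : Integrable id μ) (v : ℝ) :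
    stopLoss μ v = (∫ z in Ioi v, z ∂μ) - v * (1 - Phi μ v) := by
  have hout : ∀ z ∉ Ioi v, max (z - v) 0 = 0 := fun z hz =>
    max_eq_right (by simpa using hz)
  rw [stopLoss, ← setIntegral_eq_integral_of_forall_compl_eq_zero hout,
    setIntegral_congr_fun measurableSet_Ioi (g := fun z => z - v)
      fun z hz => max_eq_left (sub_nonneg.2 (le_of_lt hz)),
    integral_sub (f := fun z => z) hμ.integrableOn (integrable_const v), setIntegral_const,
    ← compl_Iic, probReal_compl_eq_one_sub measurableSet_Iic, smul_eq_mul, mul_comm]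
  rfl

end StopLoss

lemma Assumption1.stopLoss_pos {μ : Measure ℝ} (hμ : Assumption1 μ) (v : ℝ) :
    0 < stopLoss μ v := by
  have := hμ.prob
  rw [stopLoss_pos_iff hμ.finite_mean, ← compl_Iic, prob_compl_eq_one_sub measurableSet_Iic]
  exact tsub_pos_of_lt (hμ.lt_one v)

lemma StrictMonoOn.strictMonoOn_invFunOn {α β : Type*} [Nonempty α] [LinearOrder α] [Preorder β]
    {f : α → β} {s : Set α} {t : Set β} (hf : StrictMonoOn f s) (hst : SurjOn f s t) :
    StrictMonoOn (Function.invFunOn f s) t := fun _ hb₁ _ hb₂ hlt => by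
  obtain ⟨hmem₁, heq₁⟩ := Function.invFunOn_pos (hst hb₁)
  obtain ⟨hmem₂, heq₂⟩ := Function.invFunOn_pos (hst hb₂)
  rwa [← hf.lt_iff_lt hmem₁ hmem₂, heq₁, heq₂]

section Leverage

variable {μ : Measure ℝ} {β : ℝ}

lemma Psi_eq_sub_stopLoss [IsProbabilityMeasure μ] (hμ : Integrable id μ) (v lam : ℝ) :
    Psi μ β v lam = (1 - β) * v - β * lam * stopLoss μ v := by
  rw [Psi, stopLoss_eq_setIntegral_sub hμ v]; ring

noncomputable def lamOf (μ : Measure ℝ) (β v : ℝ) : ℝ := (1 - β) * v / (β * stopLoss μ v)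

lemma Psi_eq_zero_iff [IsProbabilityMeasure μ] (hμ : Integrable id μ) (hβ : 0 < β) {v : ℝ}
    (hv : 0 < stopLoss μ v) (lam : ℝ) : Psi μ β v lam = 0 ↔ lamOf μ β v = lam := by
  rw [Psi_eq_sub_stopLoss hμ, lamOf, div_eq_iff (mul_pos hβ hv).ne', sub_eq_zero]
  constructor <;> intro h <;> linarith

lemma lamBar_eq_lamOf {m : ℝ} (hm : 0 < m) : lamBar β m μ = lamOf μ β (1 / m) := by
  have hscale : ∀ z : ℝ, max (m * z - 1) 0 = m * max (z - 1 / m) 0 := fun z => by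
    rw [mul_max_of_nonneg _ _ hm.le, mul_zero, mul_sub, mul_one_div_cancel hm.ne']
  simp only [lamBar, lamOf, stopLoss, hscale, integral_const_mul]
  ring

variable [IsProbabilityMeasure μ]

lemma strictMonoOn_lamOf (hμ : Integrable id μ) (hg : ∀ v, 0 < stopLoss μ v) (hβ₀ : 0 < β)
    (hβ₁ : β < 1) : StrictMonoOn (lamOf μ β) (Ici 0) := fun _ _ b hb hab =>
  div_lt_div₀ (mul_lt_mul_of_pos_left hab (sub_pos.2 hβ₁))
    (mul_le_mul_of_nonneg_left (antitone_stopLoss hμ hab.le) hβ₀.le)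
    (mul_nonneg (sub_pos.2 hβ₁).le hb) (mul_pos hβ₀ (hg b))

lemma continuous_lamOf (hμ : Integrable id μ) (hg : ∀ v, 0 < stopLoss μ v) (hβ : 0 < β) :
    Continuous (lamOf μ β) :=
  (continuous_const.mul continuous_id).div (continuous_const.mul (continuous_stopLoss hμ))
    fun v => (mul_pos hβ (hg v)).ne'

lemma tendsto_lamOf_atTop (hμ : Integrable id μ) (hg : ∀ v, 0 < stopLoss μ v) (hβ₀ : 0 < β)
    (hβ₁ : β < 1) : Tendsto (lamOf μ β) atTop atTop := by
  have hc : 0 < (1 - β) / (β * stopLoss μ 0) := div_pos (sub_pos.2 hβ₁) (mul_pos hβ₀ (hg 0))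
  refine tendsto_atTop_mono' _ ?_ (tendsto_id.const_mul_atTop hc)
  filter_upwards [eventually_ge_atTop 0] with v hv
  rw [id, lamOf, div_mul_eq_mul_div]
  exact div_le_div_of_nonneg_left (mul_nonneg (sub_pos.2 hβ₁).le hv) (mul_pos hβ₀ (hg v))
    (mul_le_mul_of_nonneg_left (antitone_stopLoss hμ hv) hβ₀.le)

lemma surjOn_lamOf (hμ : Integrable id μ) (hg : ∀ v, 0 < stopLoss μ v) (hβ₀ : 0 < β)
    (hβ₁ : β < 1) : SurjOn (lamOf μ β) (Ioi 0) (Ioi 0) := by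
  have h := intermediate_value_Ioi (a := 0)
    (continuous_lamOf hμ hg hβ₀).continuousOn (tendsto_lamOf_atTop hμ hg hβ₀ hβ₁)
  rwa [show lamOf μ β 0 = 0 by simp [lamOf]] at h

end Leverage

section Root

variable {μ : Measure ℝ} {β : ℝ}

noncomputable def psiRoot (μ : Measure ℝ) (β : ℝ) : ℝ → ℝ :=
  Function.invFunOn (lamOf μ β) (Ioi 0)

lemma Assumption1.strictMonoOn_lamOf (hμ : Assumption1 μ) (hβ : β ∈ Ioo 0 1) :
    StrictMonoOn (lamOf μ β) (Ioi 0) :=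
  have := hμ.prob
  (_root_.strictMonoOn_lamOf hμ.finite_mean hμ.stopLoss_pos hβ.1 hβ.2).mono Ioi_subset_Ici_self

lemma Assumption1.surjOn_lamOf (hμ : Assumption1 μ) (hβ : β ∈ Ioo 0 1) :
    SurjOn (lamOf μ β) (Ioi 0) (Ioi 0) :=
  have := hμ.prob
  _root_.surjOn_lamOf hμ.finite_mean hμ.stopLoss_pos hβ.1 hβ.2

lemma Assumption1.psiRoot_pos (hμ : Assumption1 μ) (hβ : β ∈ Ioo 0 1) {lam : ℝ}
    (hlam : 0 < lam) : 0 < psiRoot μ β lam :=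
  Function.invFunOn_mem (hμ.surjOn_lamOf hβ hlam)

lemma Assumption1.lamOf_psiRoot (hμ : Assumption1 μ) (hβ : β ∈ Ioo 0 1) {lam : ℝ}
    (hlam : 0 < lam) : lamOf μ β (psiRoot μ β lam) = lam :=
  Function.invFunOn_eq (hμ.surjOn_lamOf hβ hlam)

lemma Assumption1.Psi_eq_zero_iff_eq_psiRoot (hμ : Assumption1 μ) (hβ : β ∈ Ioo 0 1)
    {lam w : ℝ} (hlam : 0 < lam) (hw : 0 < w) : Psi μ β w lam = 0 ↔ w = psiRoot μ β lam := by
  have := hμ.prob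
  rw [Psi_eq_zero_iff hμ.finite_mean hβ.1 (hμ.stopLoss_pos w)]
  nth_rewrite 1 [← hμ.lamOf_psiRoot hβ hlam]
  exact (hμ.strictMonoOn_lamOf hβ).injOn.eq_iff hw (hμ.psiRoot_pos hβ hlam)

lemma Assumption1.Psi_psiRoot (hμ : Assumption1 μ) (hβ : β ∈ Ioo 0 1) {lam : ℝ}
    (hlam : 0 < lam) : Psi μ β (psiRoot μ β lam) lam = 0 :=
  (hμ.Psi_eq_zero_iff_eq_psiRoot hβ hlam (hμ.psiRoot_pos hβ hlam)).2 rfl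

lemma Assumption1.strictMonoOn_psiRoot (hμ : Assumption1 μ) (hβ : β ∈ Ioo 0 1) :
    StrictMonoOn (psiRoot μ β) (Ioi 0) :=
  (hμ.strictMonoOn_lamOf hβ).strictMonoOn_invFunOn (hμ.surjOn_lamOf hβ)

lemma Assumption1.lamBar_pos (hμ : Assumption1 μ) (hβ : β ∈ Ioo 0 1) {m : ℝ} (hm : 0 < m) :
    0 < lamBar β m μ := by
  rw [lamBar_eq_lamOf hm]
  exact div_pos (mul_pos (sub_pos.2 hβ.2) (one_div_pos.2 hm))
    (mul_pos hβ.1 (hμ.stopLoss_pos _))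

lemma Assumption1.psiRoot_lamBar (hμ : Assumption1 μ) (hβ : β ∈ Ioo 0 1) {m : ℝ}
    (hm : 0 < m) : psiRoot μ β (lamBar β m μ) = 1 / m := by
  have := hμ.prob
  refine ((hμ.Psi_eq_zero_iff_eq_psiRoot hβ (hμ.lamBar_pos hβ hm) (one_div_pos.2 hm)).1 ?_).symm
  exact (Psi_eq_zero_iff hμ.finite_mean hβ.1 (hμ.stopLoss_pos _) _).2 (lamBar_eq_lamOf hm).symm

end Root

/-- **Proposition 2, part 2.** For each `λ > 0` the equation `Ψ(v, λ) = 0` has a unique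
positive root `v(λ)`; the map `λ ↦ v(λ)` is strictly increasing; `v(λ̄) = 1/m`, so
`m·v(λ) > 1` iff `λ > λ̄`. In particular, for `λ > λ̄` there is a unique growth rate
`G > 1` solving `(G/m)(1 − β(λΦ(G/m) + 1 − λ)) = βλ·∫_{G/m}^∞ z dΦ(z)`. -/
theorem prop2_growth_rate
    (μ : Measure ℝ) (hμ : Assumption1 μ)
    (β m : ℝ) (hβ : β ∈ Set.Ioo (0 : ℝ) 1) (hm : 0 < m) :
    ∃ v : ℝ → ℝ,
      (∀ lam : ℝ, 0 < lam → 0 < v lam ∧ Psi μ β (v lam) lam = 0 ∧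
        ∀ v' : ℝ, 0 < v' → Psi μ β v' lam = 0 → v' = v lam) ∧
      StrictMonoOn v (Set.Ioi 0) ∧
      v (lamBar β m μ) = 1 / m ∧
      (∀ lam : ℝ, 0 < lam → (1 < m * v lam ↔ lamBar β m μ < lam)) ∧
      (∀ lam : ℝ, lamBar β m μ < lam →
        ∃! G : ℝ, 1 < G ∧
          (G / m) * (1 - β * (lam * Phi μ (G / m) + 1 - lam)) =
            β * lam * ∫ z in Set.Ioi (G / m), z ∂μ) := by
  have hbar := hμ.lamBar_pos hβ hm
  have hmono := hμ.strictMonoOn_psiRoot hβ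
  have hiff : ∀ lam, 0 < lam → (1 < m * psiRoot μ β lam ↔ lamBar β m μ < lam) :=
    fun lam hlam => by
      rw [← div_lt_iff₀' hm, ← hμ.psiRoot_lamBar hβ hm, hmono.lt_iff_lt hbar hlam]
  refine ⟨psiRoot μ β, fun lam hlam => ⟨hμ.psiRoot_pos hβ hlam, hμ.Psi_psiRoot hβ hlam,
    fun w hw => (hμ.Psi_eq_zero_iff_eq_psiRoot hβ hlam hw).1⟩, hmono, hμ.psiRoot_lamBar hβ hm,
    hiff, fun lam hlam => ?_⟩
  have hlam₀ := hbar.trans hlam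
  refine ⟨m * psiRoot μ β lam, ⟨(hiff lam hlam₀).2 hlam, ?_⟩, fun G ⟨hG, hGeq⟩ => ?_⟩
  · rw [mul_div_cancel_left₀ _ hm.ne']
    exact sub_eq_zero.1 (hμ.Psi_psiRoot hβ hlam₀)
  · have hGroot := (hμ.Psi_eq_zero_iff_eq_psiRoot hβ hlam₀ (by positivity)).1 (sub_eq_zero.2 hGeq)
    rw [← hGroot, mul_div_cancel₀ _ hm.ne']
end

section
/- Suppose Assumptions 1 and 2 hold, λ ≥ 1, and λ < λ̄. Let (K_t, z̄_t)_{t≥0} follow the equilibrium dynamics with K_t > 0 and Φ(z̄_t) > 1 − 1/λ, and suppose (K_t, z̄_t) converges to a steady state (K*, z̄*) with K* > 0 and Φ(z̄*) > 1 − 1/λ. Set P_t = P(K_t, z̄_t). Then lim_{T→∞} q_T·P_T = 0 and P_t = V_t for all t (the land price equals its fundamental value), and the price-rent ratio P_t/F_X(K_t,1) converges to a finite positive limit. (Land Bubble Characterization Theorem, part 1: balanced growth and no bubble below the leverage threshold.) -/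
/-!
Along a path converging to a steady state with price `P* > 0` and rent `r* > 0`, the gross
interest rate `R_t = (P_{t+1} + r_{t+1}) / P_t` tends to `1 + r*/P* > 1`, so the discount factors
`q_t` decay geometrically and `q_T P_T → 0`. The pricing identity
`q_t P_t = q_{t+1} P_{t+1} + q_{t+1} r_{t+1}` telescopes, hence the discounted rents sum to
`q_t P_t`, i.e. `P_t = V_t`, and `P_t / r_t → P*/r*`.
-/

open Filter Topology MeasureTheory

section Discounting

variable {P r R q : ℕ → ℝ}

lemma discount_succ (hq : ∀ t, q t = ∏ s ∈ Finset.range t, (R s)⁻¹) (t : ℕ) :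
    q (t + 1) = q t * (R t)⁻¹ := by
  rw [hq, hq, Finset.prod_range_succ]

lemma discount_pos (hR : ∀ t, 0 < R t) (hq : ∀ t, q t = ∏ s ∈ Finset.range t, (R s)⁻¹)
    (t : ℕ) : 0 < q t := by
  rw [hq]
  exact Finset.prod_pos fun s _ => inv_pos.mpr (hR s)

lemma tendsto_discount_zero {Rstar : ℝ} (hR : ∀ t, 0 < R t)
    (hq : ∀ t, q t = ∏ s ∈ Finset.range t, (R s)⁻¹)
    (hlim : Tendsto R atTop (𝓝 Rstar)) (hRstar : 1 < Rstar) :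
    Tendsto q atTop (𝓝 0) := by
  have hratio : ∀ t, ‖q (t + 1)‖ / ‖q t‖ = (R t)⁻¹ := fun t => by
    have hqt := discount_pos hR hq t
    rw [discount_succ hq, Real.norm_of_nonneg (mul_pos hqt (inv_pos.mpr (hR t))).le,
      Real.norm_of_nonneg hqt.le, mul_div_cancel_left₀ _ hqt.ne']
  refine (summable_of_ratio_test_tendsto_lt_one (inv_lt_one_of_one_lt₀ hRstar)
    (Eventually.of_forall fun t => (discount_pos hR hq t).ne') ?_).tendsto_atTop_zero
  simpa only [hratio] using hlim.inv₀ (zero_lt_one.trans hRstar).ne'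

section Pricing

variable (hP : ∀ t, 0 < P t) (hr : ∀ t, 0 ≤ r t)
  (hR : ∀ t, R t = (P (t + 1) + r (t + 1)) / P t)
  (hq : ∀ t, q t = ∏ s ∈ Finset.range t, (R s)⁻¹)
include hP hr hR

lemma gross_return_pos (t : ℕ) : 0 < R t := by
  rw [hR]
  exact div_pos (add_pos_of_pos_of_nonneg (hP _) (hr _)) (hP t)

include hq

lemma discounted_price_succ (t : ℕ) :
    q t * P t = q (t + 1) * P (t + 1) + q (t + 1) * r (t + 1) := by
  have hdiv : 0 < P (t + 1) + r (t + 1) := add_pos_of_pos_of_nonneg (hP _) (hr _)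
  rw [discount_succ hq, hR]
  field_simp [(hP t).ne', hdiv.ne']

lemma sum_discounted_rents (t n : ℕ) :
    ∑ s ∈ Finset.range n, q (t + 1 + s) * r (t + 1 + s) =
      q t * P t - q (t + n) * P (t + n) := by
  have htel := Finset.sum_range_sub' (fun i => q (t + i) * P (t + i)) n
  rw [add_zero] at htel
  rw [← htel]
  refine Finset.sum_congr rfl fun s _ => ?_
  rw [discounted_price_succ hP hr hR hq (t + s), ← add_assoc, add_right_comm t s 1]
  ring

lemma hasSum_discounted_rents (hlim : Tendsto (fun T => q T * P T) atTop (𝓝 0)) (t : ℕ) :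
    HasSum (fun s => q (t + 1 + s) * r (t + 1 + s)) (q t * P t) := by
  have hq_pos := discount_pos (gross_return_pos hP hr hR) hq
  refine (hasSum_iff_tendsto_nat_of_nonneg
    (fun s => mul_nonneg (hq_pos _).le (hr _)) _).mpr ?_
  have htail : Tendsto (fun n => q (t + n) * P (t + n)) atTop (𝓝 0) := by
    simpa only [Function.comp_def, add_comm _ t] using hlim.comp (tendsto_add_atTop_nat t)
  simpa only [sum_discounted_rents hP hr hR hq t, sub_zero] using
    tendsto_const_nhds.sub htail

lemma price_eq_fundamental (hlim : Tendsto (fun T => q T * P T) atTop (𝓝 0)) (t : ℕ) :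
    P t = (q t)⁻¹ * ∑' s : ℕ, q (t + 1 + s) * r (t + 1 + s) := by
  have hqt := discount_pos (gross_return_pos hP hr hR) hq t
  rw [(hasSum_discounted_rents hP hr hR hq hlim t).tsum_eq, inv_mul_cancel_left₀ hqt.ne']

end Pricing

end Discounting

open ProbabilityTheory in
lemma continuous_Phi (μ : Measure ℝ) [IsProbabilityMeasure μ] (habs : μ ≪ volume) :
    Continuous (Phi μ) := by
  have hPhi : Phi μ = cdf μ := funext fun z => by rw [Phi, cdf_eq_real]; rfl
  rw [hPhi, continuous_iff_continuousAt]
  intro a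
  rw [(cdf μ).mono.continuousAt_iff_leftLim_eq_rightLim, StieltjesFunction.rightLim_eq]
  have hatom : (cdf μ).measure {a} = 0 := by
    rw [measure_cdf]
    exact habs Real.volume_singleton
  rw [StieltjesFunction.measure_singleton, ENNReal.ofReal_eq_zero] at hatom
  linarith [(cdf μ).mono.leftLim_le (le_refl a)]

lemma Phi_lt_one {μ : Measure ℝ} (hμ : Assumption1 μ) (z : ℝ) : Phi μ z < 1 := by
  simpa [Phi] using ENNReal.toReal_strict_mono ENNReal.one_ne_top (hμ.lt_one z)

lemma leverage_share_mem_Ioo {lam φ : ℝ} (hlam : 0 < lam) (hφ : 1 - 1 / lam < φ)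
    (hφ1 : φ < 1) : lam * φ + 1 - lam ∈ Set.Ioo 0 1 := by
  have h : lam * (1 - 1 / lam) < lam * φ := mul_lt_mul_of_pos_left hφ hlam
  rw [mul_sub, mul_one, mul_one_div_cancel hlam.ne'] at h
  constructor <;> nlinarith

lemma one_sub_mul_pos {β a : ℝ} (hβ : β ∈ Set.Ioo (0 : ℝ) 1) (ha : a ∈ Set.Ioo (0 : ℝ) 1) :
    0 < 1 - β * a := by
  nlinarith [hβ.1, hβ.2, ha.1, ha.2]

lemma Assumption2.continuousAt_FX_one {F FK FX : ℝ → ℝ → ℝ} {m K : ℝ}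
    (hF : Assumption2 F FK FX m) (hK : 0 < K) : ContinuousAt (fun k => FX k 1) K :=
  (hF.FX_cont.continuousAt ((isOpen_Ioi.prod isOpen_Ioi).mem_nhds
    (Set.mk_mem_prod hK (zero_lt_one (α := ℝ))))).comp (f := fun k => (k, (1 : ℝ)))
    (continuousAt_id.prodMk continuousAt_const)

section Pfun

variable {μ : Measure ℝ} {β lam : ℝ} {F : ℝ → ℝ → ℝ}

lemma Pfun_pos {K zb : ℝ} (hβ : β ∈ Set.Ioo (0 : ℝ) 1)
    (ha : lam * Phi μ zb + 1 - lam ∈ Set.Ioo 0 1) (hF : 0 < F K 1) :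
    0 < Pfun μ β lam F K zb :=
  div_pos (mul_pos (mul_pos hβ.1 ha.1) hF) (one_sub_mul_pos hβ ha)

lemma tendsto_Pfun {K zb : ℕ → ℝ} {Kstar zstar : ℝ}
    (hconvK : Tendsto K atTop (𝓝 Kstar)) (hconvz : Tendsto zb atTop (𝓝 zstar))
    (hFc : ContinuousAt (fun k => F k 1) Kstar) (hPhic : ContinuousAt (Phi μ) zstar)
    (hden : 1 - β * (lam * Phi μ zstar + 1 - lam) ≠ 0) :
    Tendsto (fun t => Pfun μ β lam F (K t) (zb t)) atTop
      (𝓝 (Pfun μ β lam F Kstar zstar)) := by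
  have ha : Tendsto (fun t => β * (lam * Phi μ (zb t) + 1 - lam)) atTop
      (𝓝 (β * (lam * Phi μ zstar + 1 - lam))) :=
    ((((hPhic.tendsto.comp hconvz).const_mul lam).add_const 1).sub_const lam).const_mul β
  exact (ha.mul (hFc.tendsto.comp hconvK)).div (ha.const_sub 1) hden

end Pfun

theorem land_bubble_characterization_fundamental_general
    (μ : Measure ℝ) (hμ : Assumption1 μ)
    (F FK FX : ℝ → ℝ → ℝ) (m : ℝ) (hF : Assumption2 F FK FX m)
    (β lam : ℝ) (hβ : β ∈ Set.Ioo (0 : ℝ) 1) (hlam : 1 ≤ lam)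
    (K zb : ℕ → ℝ) (hKpos : ∀ t, 0 < K t) (hthr : ∀ t, 1 - 1 / lam < Phi μ (zb t))
    (Kstar zstar : ℝ) (hKstar : 0 < Kstar) (hzstar : 1 - 1 / lam < Phi μ zstar)
    (hconvK : Tendsto K atTop (𝓝 Kstar)) (hconvz : Tendsto zb atTop (𝓝 zstar))
    (P r R q V : ℕ → ℝ)
    (hP : ∀ t, P t = Pfun μ β lam F (K t) (zb t))
    (hr : ∀ t, r t = FX (K t) 1)
    (hR : ∀ t, R t = (P (t + 1) + r (t + 1)) / P t)
    (hq : ∀ t, q t = ∏ s ∈ Finset.range t, (R s)⁻¹)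
    (hV : ∀ t, V t = (q t)⁻¹ * ∑' s : ℕ, q (t + 1 + s) * r (t + 1 + s)) :
    Tendsto (fun T => q T * P T) atTop (𝓝 0) ∧
    (∀ t, P t = V t) ∧
    ∃ L : ℝ, 0 < L ∧ Tendsto (fun t => P t / r t) atTop (𝓝 L) := by
  have := hμ.prob
  have hshare : ∀ z, 1 - 1 / lam < Phi μ z → lam * Phi μ z + 1 - lam ∈ Set.Ioo 0 1 :=
    fun z hz => leverage_share_mem_Ioo (by linarith) hz (Phi_lt_one hμ z)
  have hP_pos : ∀ t, 0 < P t := fun t =>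
    hP t ▸ Pfun_pos hβ (hshare _ (hthr t)) (hF.pos _ 1 (hKpos t) one_pos)
  have hr_nonneg : ∀ t, 0 ≤ r t := fun t => (hr t ▸ hF.FX_pos _ 1 (hKpos t) one_pos).le
  set Pstar := Pfun μ β lam F Kstar zstar
  have hPstar : 0 < Pstar := Pfun_pos hβ (hshare _ hzstar) (hF.pos _ 1 hKstar one_pos)
  have hrstar : 0 < FX Kstar 1 := hF.FX_pos _ 1 hKstar one_pos
  have hPlim : Tendsto P atTop (𝓝 Pstar) :=
    (tendsto_Pfun hconvK hconvz (hF.hFK Kstar 1 hKstar one_pos).continuousAt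
      ((continuous_Phi μ hμ.absCont).continuousAt)
      (one_sub_mul_pos hβ (hshare _ hzstar)).ne').congr fun t => (hP t).symm
  have hrlim : Tendsto r atTop (𝓝 (FX Kstar 1)) :=
    ((hF.continuousAt_FX_one hKstar).tendsto.comp hconvK).congr fun t => (hr t).symm
  have hRlim : Tendsto R atTop (𝓝 ((Pstar + FX Kstar 1) / Pstar)) :=
    (((hPlim.comp (tendsto_add_atTop_nat 1)).add (hrlim.comp (tendsto_add_atTop_nat 1))).div
      hPlim hPstar.ne').congr fun t => (hR t).symm
  have hqP : Tendsto (fun T => q T * P T) atTop (𝓝 0) := by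
    have hq0 := tendsto_discount_zero (gross_return_pos hP_pos hr_nonneg hR) hq hRlim
      ((one_lt_div hPstar).mpr (by linarith))
    simpa only [zero_mul] using hq0.mul hPlim
  refine ⟨hqP, fun t => ?_, Pstar / FX Kstar 1, div_pos hPstar hrstar,
    hPlim.div hrlim hrstar.ne'⟩
  rw [hV, price_eq_fundamental hP_pos hr_nonneg hR hq hqP]

/-- **Land Bubble Characterization Theorem, part 1.** Under Assumptions 1 and 2,
`1 ≤ λ < λ̄`, along any equilibrium path `(K_t, z̄_t)` converging to a steady state,
the discounted price `q_T·P_T` tends to `0`, the land price equals its fundamental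
value (`P_t = V_t` for all `t`), and the price-rent ratio converges to a finite
positive limit (balanced growth, no bubble). -/
theorem land_bubble_characterization_fundamental
    (μ : Measure ℝ) (hμ : Assumption1 μ)
    (F FK FX : ℝ → ℝ → ℝ) (m : ℝ) (hF : Assumption2 F FK FX m)
    (β lam : ℝ) (hβ : β ∈ Set.Ioo (0 : ℝ) 1) (hlam : 1 ≤ lam)
    (hlt : lam < lamBar β m μ)
    (K zb : ℕ → ℝ) (hKpos : ∀ t, 0 < K t) (hthr : ∀ t, 1 - 1 / lam < Phi μ (zb t))
    (hdynK : ∀ t, K (t + 1) =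
      β * lam * Wfun μ β lam F (K t) (zb t) * ∫ z in Set.Ioi (zb t), z ∂μ)
    (hdynz : ∀ t, zb t = (Pfun μ β lam F (K (t + 1)) (zb (t + 1)) + FX (K (t + 1)) 1) /
      (FK (K (t + 1)) 1 * Pfun μ β lam F (K t) (zb t)))
    (Kstar zstar : ℝ) (hKstar : 0 < Kstar) (hzstar : 1 - 1 / lam < Phi μ zstar)
    (hconvK : Tendsto K atTop (𝓝 Kstar)) (hconvz : Tendsto zb atTop (𝓝 zstar))
    (P r R q V : ℕ → ℝ)
    (hP : ∀ t, P t = Pfun μ β lam F (K t) (zb t))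
    (hr : ∀ t, r t = FX (K t) 1)
    (hR : ∀ t, R t = (P (t + 1) + r (t + 1)) / P t)
    (hq : ∀ t, q t = ∏ s ∈ Finset.range t, (R s)⁻¹)
    (hV : ∀ t, V t = (q t)⁻¹ * ∑' s : ℕ, q (t + 1 + s) * r (t + 1 + s)) :
    Tendsto (fun T => q T * P T) atTop (𝓝 0) ∧
    (∀ t, P t = V t) ∧
    ∃ L : ℝ, 0 < L ∧ Tendsto (fun t => P t / r t) atTop (𝓝 L) :=
  land_bubble_characterization_fundamental_general μ hμ F FK FX m hF β lam hβ hlam K zb hKpos hthr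
    Kstar zstar hKstar hzstar hconvK hconvz P r R q V hP hr hR hq hV
end

section
/- Suppose Assumptions 1, 2, 3, and 4 hold and λ > λ̄. Let G > 1 be the unique solution of (G/m)·(1 − β(λΦ(G/m) + 1 − λ)) = βλ·∫_{G/m}^∞ z dΦ(z), with Φ(G/m) > 1 − 1/λ. Let (K_t, z̄_t)_{t≥0} follow the equilibrium dynamics with K_t > 0 and Φ(z̄_t) > 1 − 1/λ, and suppose K_t/G^t converges to a positive limit and z̄_t → G/m. Set P_t = P(K_t, z̄_t). Then ∑_{t=1}^∞ F_X(K_t,1)/P_t < ∞, land exhibits a bubble (P_t > V_t for all t), and the price-rent ratio P_t/F_X(K_t,1) diverges to ∞. (Land Bubble Characterization Theorem, part 2: unbalanced growth and a land price bubble above the leverage threshold.) -/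
open Filter Topology MeasureTheory

/-!
Since `K_t ≈ c G^t` with `G > 1` and `z̄_t → G/m`, the price grows like capital: `P_t / K_t`
tends to a positive limit. Rents grow strictly slower: by homogeneity `F_X(K,1) = F_X(1,1/K)`, and
concavity of `x ↦ F(1,x)` bounds `F_X(1,x) x` along the geometrically decreasing `x_t = 1/K_t` by a
multiple of the telescoping differences `F(1,x_t) - F(1,x_{t+1})`. Hence `∑ r_t / P_t < ∞`.
Discounted prices then satisfy
`q_t P_t = q_0 P_0 / ∏_{s<t} (1 + r_{s+1}/P_{s+1}) ≥ q_0 P_0 e^{-∑ r/P}`, and since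
`∑_{s<N} q_{t+1+s} r_{t+1+s} = q_t P_t - q_{t+N} P_{t+N}`, the fundamental value falls short of
the price by a positive amount.
-/

open ProbabilityTheory Function

lemma Phi_eq_cdf (μ : Measure ℝ) [IsProbabilityMeasure μ] : Phi μ = cdf μ :=
  funext fun x => (cdf_eq_real μ x).symm

lemma continuousAt_Phi {μ : Measure ℝ} [IsProbabilityMeasure μ] {a : ℝ} (ha : μ {a} = 0) :
    ContinuousAt (Phi μ) a := by
  rw [Phi_eq_cdf]
  have hjump : ENNReal.ofReal (cdf μ a - leftLim (cdf μ) a) = 0 := by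
    rw [← StieltjesFunction.measure_singleton, measure_cdf, ha]
  have hleft : leftLim (cdf μ) a = cdf μ a :=
    le_antisymm ((monotone_cdf μ).leftLim_le le_rfl)
      (sub_nonpos.1 (ENNReal.ofReal_eq_zero.1 hjump))
  refine continuousAt_iff_continuous_left_right.2 ⟨?_, (cdf μ).right_continuous a⟩
  exact continuousWithinAt_Iio_iff_Iic.1
    ((monotone_cdf μ).continuousWithinAt_Iio_iff_leftLim_eq.2 hleft)

/-- The tangent at `x t` lies above the chord to `x (t+1)`, so the terms are dominated by the
telescoping differences `f (x t) - f (x (t+1))`. -/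
lemma ConcaveOn.summable_deriv_mul {f f' : ℝ → ℝ} {x : ℕ → ℝ} {ρ : ℝ}
    (hf : ConcaveOn ℝ (Set.Ioi 0) f) (hf' : ∀ y, 0 < y → HasDerivAt f (f' y) y)
    (hf'_nonneg : ∀ y, 0 < y → 0 ≤ f' y) (hf_nonneg : ∀ y, 0 < y → 0 ≤ f y)
    (hx : ∀ t, 0 < x t) (hρ : ρ < 1) (hratio : Tendsto (fun t => x (t + 1) / x t) atTop (𝓝 ρ)) :
    Summable fun t => f' (x t) * x t := by
  obtain ⟨σ, hρσ, hσ1⟩ := exists_between hρ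
  obtain ⟨N, hN⟩ := eventually_atTop.1 (hratio.eventually (eventually_le_nhds hρσ))
  rw [← summable_nat_add_iff N]
  have hstep : ∀ t, (1 - σ) * (f' (x (t + N)) * x (t + N)) ≤ f (x (t + N)) - f (x (t + 1 + N)) := by
    intro t
    have hxt := hx (t + N)
    have hshrink : x (t + 1 + N) ≤ σ * x (t + N) := by
      have := hN (t + N) (by omega)
      rwa [div_le_iff₀ hxt, show t + N + 1 = t + 1 + N by omega] at this
    have hlt : x (t + 1 + N) < x (t + N) := by nlinarith [hx (t + 1 + N)]
    have htangent := hf.le_slope_of_hasDerivAt (hx (t + 1 + N)) hxt hlt (hf' _ hxt)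
    rw [slope_def_field, le_div_iff₀ (by linarith)] at htangent
    nlinarith [hf'_nonneg _ hxt]
  refine summable_of_sum_range_le (c := f (x N) / (1 - σ))
    (fun t => mul_nonneg (hf'_nonneg _ (hx _)) (hx _).le) fun n => ?_
  rw [le_div_iff₀ (by linarith), mul_comm, Finset.mul_sum]
  calc ∑ t ∈ Finset.range n, (1 - σ) * (f' (x (t + N)) * x (t + N))
      ≤ ∑ t ∈ Finset.range n, (f (x (t + N)) - f (x (t + 1 + N))) :=
        Finset.sum_le_sum fun t _ => hstep t
    _ = f (x N) - f (x (n + N)) := by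
        rw [Finset.sum_range_sub' (fun t => f (x (t + N)))]; simp
    _ ≤ f (x N) := by linarith [hf_nonneg _ (hx (n + N))]

lemma tendsto_div_succ_of_tendsto_div_pow {u : ℕ → ℝ} {G c : ℝ} (hG : G ≠ 0) (hc : c ≠ 0)
    (hu : Tendsto (fun t => u t / G ^ t) atTop (𝓝 c)) :
    Tendsto (fun t => u t / u (t + 1)) atTop (𝓝 G⁻¹) := by
  have hsucc := (tendsto_add_atTop_iff_nat 1).2 hu
  convert (hu.div hsucc hc).div_const G using 1
  · funext t
    simp only [Pi.div_apply]
    rw [pow_succ]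
    field_simp
  · field_simp

lemma tsum_discounted_rent_lt {P r q : ℕ → ℝ} (hP : ∀ t, 0 < P t) (hr : ∀ t, 0 < r t)
    (hq : ∀ t, 0 < q t) (hstep : ∀ t, q (t + 1) * (P (t + 1) + r (t + 1)) = q t * P t)
    (hsum : Summable fun t => r (t + 1) / P (t + 1)) (t : ℕ) :
    ∑' s, q (t + 1 + s) * r (t + 1 + s) < q t * P t := by
  have hu : ∀ i, 0 ≤ r (i + 1) / P (i + 1) := fun i => (div_pos (hr _) (hP _)).le
  have hprod : ∀ n, q n * P n * ∏ i ∈ Finset.range n, (1 + r (i + 1) / P (i + 1)) = q 0 * P 0 := by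
    intro n
    induction n with
    | zero => simp
    | succ n ih =>
      rw [Finset.prod_range_succ, ← ih, ← hstep n]
      field_simp [(hP (n + 1)).ne']
  set S := ∑' i, r (i + 1) / P (i + 1)
  have hgap : 0 < q 0 * P 0 * Real.exp (-S) := by have := hq 0; have := hP 0; positivity
  have hlower : ∀ n, q 0 * P 0 * Real.exp (-S) ≤ q n * P n := by
    intro n
    calc q 0 * P 0 * Real.exp (-S)
        = q n * P n * ((∏ i ∈ Finset.range n, (1 + r (i + 1) / P (i + 1))) * Real.exp (-S)) := by
          rw [← hprod n]; ring
      _ ≤ q n * P n * (Real.exp S * Real.exp (-S)) := by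
          gcongr
          · exact (mul_pos (hq n) (hP n)).le
          · exact (Real.prod_one_add_le_exp_sum _ hu).trans
              (Real.exp_le_exp.2 (hsum.sum_le_tsum _ fun i _ => hu i))
      _ = q n * P n := by rw [← Real.exp_add, add_neg_cancel, Real.exp_zero, mul_one]
  have htel : ∀ N, ∑ i ∈ Finset.range N, q (t + 1 + i) * r (t + 1 + i) =
      q t * P t - q (t + N) * P (t + N) := by
    intro N
    induction N with
    | zero => simp
    | succ N ih =>
      rw [Finset.sum_range_succ, ih, ← hstep (t + N)]
      rw [show t + 1 + N = t + N + 1 by omega, show t + (N + 1) = t + N + 1 by omega]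
      ring
  calc ∑' s, q (t + 1 + s) * r (t + 1 + s) ≤ q t * P t - q 0 * P 0 * Real.exp (-S) :=
        Real.tsum_le_of_sum_range_le (fun s => (mul_pos (hq _) (hr _)).le)
          fun N => by linarith [htel N, hlower (t + N)]
    _ < q t * P t := by linarith

lemma Summable.tendsto_inv_atTop {f : ℕ → ℝ} (hf : Summable f) (hpos : ∀ n, 0 < f n) :
    Tendsto (fun n => (f n)⁻¹) atTop atTop :=
  (tendsto_nhdsWithin_iff.2 ⟨hf.tendsto_atTop_zero, .of_forall hpos⟩).inv_tendsto_nhdsGT_zero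

namespace Assumption2

variable {F FK FX : ℝ → ℝ → ℝ} {m : ℝ}

lemma concaveOn_one (hF : Assumption2 F FK FX m) : ConcaveOn ℝ (Set.Ioi 0) (F 1) := by
  refine ⟨convex_Ioi 0, fun x hx y hy a b ha hb hab => ?_⟩
  simpa [hab] using hF.concave.2 (x := (1, x)) (y := (1, y))
    ⟨Set.mem_Ioi.2 one_pos, hx⟩ ⟨Set.mem_Ioi.2 one_pos, hy⟩ ha hb hab

/-- Differentiate `F (K, K x) = K F (1, x)` in `x` at `x = K⁻¹`. -/
lemma FX_eq_FX_one_inv (hF : Assumption2 F FK FX m) {K : ℝ} (hK : 0 < K) :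
    FX K 1 = FX 1 K⁻¹ := by
  have hKinv : 0 < K⁻¹ := inv_pos.2 hK
  have hlhs : HasDerivAt (fun x => F K (K * x)) (FX K 1 * K) K⁻¹ := by
    have := (hF.hFX K (K * K⁻¹) hK (by simp [hK.ne'])).comp K⁻¹ ((hasDerivAt_id K⁻¹).const_mul K)
    simpa [mul_inv_cancel₀ hK.ne', Function.comp_def] using this
  have hrhs : HasDerivAt (fun x => F K (K * x)) (K * FX 1 K⁻¹) K⁻¹ := by
    refine ((hF.hFX 1 K⁻¹ one_pos hKinv).const_mul K).congr_of_eventuallyEq ?_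
    filter_upwards [Ioi_mem_nhds hKinv] with x hx
    simpa using hF.homog K 1 x hK one_pos hx
  exact mul_right_cancel₀ hK.ne' ((hlhs.unique hrhs).trans (mul_comm _ _))

lemma summable_FX_div {K : ℕ → ℝ} {ρ : ℝ} (hF : Assumption2 F FK FX m) (hK : ∀ t, 0 < K t)
    (hρ : ρ < 1) (hratio : Tendsto (fun t => K t / K (t + 1)) atTop (𝓝 ρ)) :
    Summable fun t => FX (K t) 1 / K t := by
  have hsum := hF.concaveOn_one.summable_deriv_mul (f' := FX 1) (x := fun t => (K t)⁻¹)
    (fun y hy => hF.hFX 1 y one_pos hy) (fun y hy => (hF.FX_pos 1 y one_pos hy).le)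
    (fun y hy => (hF.pos 1 y one_pos hy).le) (fun t => inv_pos.2 (hK t)) hρ
    (by simpa only [inv_div_inv] using hratio)
  refine hsum.congr fun t => ?_
  rw [hF.FX_eq_FX_one_inv (hK t), div_eq_mul_inv]

end Assumption2

lemma tendsto_Pfun_div {μ : Measure ℝ} {β lam m z : ℝ} {F : ℝ → ℝ → ℝ} {K zb : ℕ → ℝ}
    (hF : Tendsto (fun K => F K 1 / K) atTop (𝓝 m)) (hK : Tendsto K atTop atTop)
    (hzb : Tendsto (fun t => Phi μ (zb t)) atTop (𝓝 (Phi μ z)))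
    (hz : β * (lam * Phi μ z + 1 - lam) ≠ 1) :
    Tendsto (fun t => Pfun μ β lam F (K t) (zb t) / K t) atTop
      (𝓝 (β * (lam * Phi μ z + 1 - lam) * m / (1 - β * (lam * Phi μ z + 1 - lam)))) := by
  have hθ := (((hzb.const_mul lam).add_const 1).sub_const lam).const_mul β
  refine ((hθ.mul (hF.comp hK)).div (tendsto_const_nhds.sub hθ) (sub_ne_zero.2 hz.symm)).congr
    fun t => ?_
  simp only [Pfun, Pi.div_apply, Function.comp_apply]
  ring

lemma fundamental_value_lt_price {P r R q V : ℕ → ℝ} (hP : ∀ t, 0 < P t) (hr : ∀ t, 0 < r t)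
    (hR : ∀ t, R t = (P (t + 1) + r (t + 1)) / P t)
    (hq : ∀ t, q t = ∏ s ∈ Finset.range t, (R s)⁻¹)
    (hV : ∀ t, V t = (q t)⁻¹ * ∑' s : ℕ, q (t + 1 + s) * r (t + 1 + s))
    (hsum : Summable fun t => r (t + 1) / P (t + 1)) (t : ℕ) :
    V t < P t := by
  have hq_pos : ∀ t, 0 < q t := fun t => by
    rw [hq]
    exact Finset.prod_pos fun s _ => by
      rw [hR]
      exact inv_pos.2 (div_pos (add_pos (hP (s + 1)) (hr (s + 1))) (hP s))
  have hstep : ∀ t, q (t + 1) * (P (t + 1) + r (t + 1)) = q t * P t := fun t => by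
    rw [hq, Finset.prod_range_succ, ← hq, hR]
    field_simp [(add_pos (hP (t + 1)) (hr (t + 1))).ne']
  rw [hV, inv_mul_lt_iff₀ (hq_pos t)]
  exact tsum_discounted_rent_lt hP hr hq_pos hstep hsum t

lemma price_coeff_lt_one {μ : Measure ℝ} [IsProbabilityMeasure μ] {β lam z : ℝ}
    (hβ : β ∈ Set.Ioo 0 1) (hlam : 0 ≤ lam) : β * (lam * Phi μ z + 1 - lam) < 1 := by
  have hPhi : Phi μ z ≤ 1 := by rw [Phi_eq_cdf]; exact cdf_le_one μ z
  nlinarith [hβ.1, hβ.2, mul_le_mul_of_nonneg_left hPhi hlam]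

lemma price_coeff_mul_div_pos {μ : Measure ℝ} [IsProbabilityMeasure μ] {β lam z X : ℝ}
    (hβ : β ∈ Set.Ioo 0 1) (hlam : 0 < lam) (hz : 1 - 1 / lam < Phi μ z) (hX : 0 < X) :
    0 < β * (lam * Phi μ z + 1 - lam) * X / (1 - β * (lam * Phi μ z + 1 - lam)) := by
  have hshare : 0 < lam * Phi μ z + 1 - lam := by
    have := mul_lt_mul_of_pos_left hz hlam
    rw [mul_sub, mul_one, mul_one_div_cancel hlam.ne'] at this
    linarith
  have := hβ.1
  exact div_pos (by positivity) (sub_pos.2 (price_coeff_lt_one hβ hlam.le))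

theorem land_bubble_characterization_bubbly_general
    (μ : Measure ℝ) (hμ : Assumption1 μ)
    (F FK FX : ℝ → ℝ → ℝ) (m : ℝ) (hF : Assumption2 F FK FX m)
    (β lam : ℝ) (hβ : β ∈ Set.Ioo (0 : ℝ) 1) (hlam : 1 ≤ lam)
    (s : ℝ → ℝ)
    (G : ℝ) (hG1 : 1 < G)
    (hGthr : 1 - 1 / lam < Phi μ (G / m))
    (K zb : ℕ → ℝ) (hKpos : ∀ t, 0 < K t) (hthr : ∀ t, 1 - 1 / lam < Phi μ (zb t))
    (c : ℝ) (hc : 0 < c) (hconvK : Tendsto (fun t => K t / G ^ t) atTop (𝓝 c))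
    (hconvz : Tendsto zb atTop (𝓝 (G / m)))
    (P r R q V : ℕ → ℝ)
    (hP : ∀ t, P t = Pfun μ β lam F (K t) (zb t))
    (hr : ∀ t, r t = FX (K t) 1)
    (hR : ∀ t, R t = (P (t + 1) + r (t + 1)) / P t)
    (hq : ∀ t, q t = ∏ s ∈ Finset.range t, (R s)⁻¹)
    (hV : ∀ t, V t = (q t)⁻¹ * ∑' s : ℕ, q (t + 1 + s) * r (t + 1 + s)) :
    Summable (fun t => r (t + 1) / P (t + 1)) ∧
    (∀ t, V t < P t) ∧
    Tendsto (fun t => P t / r t) atTop atTop := by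
  have := hμ.prob
  have hlam0 : 0 < lam := by linarith
  have hP_pos : ∀ t, 0 < P t := fun t => by
    rw [hP, Pfun]
    exact price_coeff_mul_div_pos hβ hlam0 (hthr t) (hF.pos (K t) 1 (hKpos t) one_pos)
  have hr_pos : ∀ t, 0 < r t := fun t => hr t ▸ hF.FX_pos _ _ (hKpos t) one_pos
  have hK_top : Tendsto K atTop atTop :=
    (hconvK.pos_mul_atTop hc (tendsto_pow_atTop_atTop_of_one_lt hG1)).congr fun t => by
      field_simp
  have hPhi : Tendsto (fun t => Phi μ (zb t)) atTop (𝓝 (Phi μ (G / m))) :=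
    (continuousAt_Phi (hμ.absCont Real.volume_singleton)).tendsto.comp hconvz
  have hKP : Tendsto (fun t => K t / P t) atTop (𝓝 _) :=
    ((tendsto_Pfun_div hF.lim_avg hK_top hPhi (price_coeff_lt_one hβ hlam0.le).ne).inv₀
      (price_coeff_mul_div_pos hβ hlam0 hGthr hF.m_pos).ne').congr fun t => by rw [hP, inv_div]
  have hrK : Summable fun t => r t / K t := by
    simpa only [hr] using hF.summable_FX_div hKpos (inv_lt_one_of_one_lt₀ hG1)
      (tendsto_div_succ_of_tendsto_div_pow (zero_lt_one.trans hG1).ne' hc.ne' hconvK)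
  have hsum : Summable fun t => r t / P t :=
    (hrK.norm.mul_tendsto_const (hKP.mono_left Nat.cofinite_eq_atTop.le)).congr fun t =>
      div_mul_div_cancel₀ (hKpos t).ne'
  have hsum_succ := (summable_nat_add_iff 1).2 hsum
  exact ⟨hsum_succ, fundamental_value_lt_price hP_pos hr_pos hR hq hV hsum_succ,
    (hsum.tendsto_inv_atTop fun t => div_pos (hr_pos t) (hP_pos t)).congr fun t => inv_div _ _⟩

/-- **Land Bubble Characterization Theorem, part 2.** Under Assumptions 1–4 and
`λ > λ̄`, along the equilibrium path `(K_t, z̄_t)` with `K_t/G^t` converging to a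
positive limit and `z̄_t → G/m` (where `G > 1` solves the growth-rate equation),
future rent-price ratios are summable, land exhibits a bubble (`P_t > V_t` for all
`t`), and the price-rent ratio diverges to infinity (unbalanced growth). -/
theorem land_bubble_characterization_bubbly
    (μ : Measure ℝ) (hμ : Assumption1 μ)
    (F FK FX : ℝ → ℝ → ℝ) (m : ℝ) (hF : Assumption2 F FK FX m)
    (β lam : ℝ) (hβ : β ∈ Set.Ioo (0 : ℝ) 1) (hlam : 1 ≤ lam)
    (hA3 : 1 - Phi μ (1 / m) < β * m * ∫ z in Set.Ioi (1 / m), z ∂μ)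
    -- Assumption 4: `liminf_{K→∞} σ(K,1) > 1`, i.e. the derivative of the
    -- log marginal-rate-of-substitution has `limsup < 1` at infinity.
    (s : ℝ → ℝ)
    (hs : ∀ k : ℝ, HasDerivAt
      (fun k' => Real.log (FX (Real.exp k') 1 / FK (Real.exp k') 1)) (s k) k)
    (hA4 : Filter.limsup s Filter.atTop < 1)
    (hlamgt : lamBar β m μ < lam)
    (G : ℝ) (hG1 : 1 < G)
    (hGeq : (G / m) * (1 - β * (lam * Phi μ (G / m) + 1 - lam)) =
      β * lam * ∫ z in Set.Ioi (G / m), z ∂μ)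
    (hGthr : 1 - 1 / lam < Phi μ (G / m))
    (K zb : ℕ → ℝ) (hKpos : ∀ t, 0 < K t) (hthr : ∀ t, 1 - 1 / lam < Phi μ (zb t))
    (hdynK : ∀ t, K (t + 1) =
      β * lam * Wfun μ β lam F (K t) (zb t) * ∫ z in Set.Ioi (zb t), z ∂μ)
    (hdynz : ∀ t, zb t = (Pfun μ β lam F (K (t + 1)) (zb (t + 1)) + FX (K (t + 1)) 1) /
      (FK (K (t + 1)) 1 * Pfun μ β lam F (K t) (zb t)))
    (c : ℝ) (hc : 0 < c) (hconvK : Tendsto (fun t => K t / G ^ t) atTop (𝓝 c))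
    (hconvz : Tendsto zb atTop (𝓝 (G / m)))
    (P r R q V : ℕ → ℝ)
    (hP : ∀ t, P t = Pfun μ β lam F (K t) (zb t))
    (hr : ∀ t, r t = FX (K t) 1)
    (hR : ∀ t, R t = (P (t + 1) + r (t + 1)) / P t)
    (hq : ∀ t, q t = ∏ s ∈ Finset.range t, (R s)⁻¹)
    (hV : ∀ t, V t = (q t)⁻¹ * ∑' s : ℕ, q (t + 1 + s) * r (t + 1 + s)) :
    Summable (fun t => r (t + 1) / P (t + 1)) ∧
    (∀ t, V t < P t) ∧
    Tendsto (fun t => P t / r t) atTop atTop :=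
  land_bubble_characterization_bubbly_general μ hμ F FK FX m hF β lam hβ hlam s G hG1 hGthr K zb
    hKpos hthr c hc hconvK hconvz P r R q V hP hr hR hq hV
end

section
/- Let λ̄(β, m, Φ) = ((1−β)/β)·(∫₀^∞ max{mz−1, 0} dΦ(z))⁻¹ be the leverage threshold, where Φ satisfies Assumption 1. Then: (i) λ̄ is strictly decreasing in β ∈ (0,1); (ii) λ̄ is strictly decreasing in m > 0; (iii) if Φ₁ and Φ₂ both satisfy Assumption 1 and Φ₂ first-order stochastically dominates Φ₁ (i.e., 1 − Φ₁(z) ≤ 1 − Φ₂(z) for all z), then λ̄(β, m, Φ₁) ≥ λ̄(β, m, Φ₂); (iv) for the CES production function, m = A·α^{1/(1−ρ)} + 1 − δ if ρ < 1 and m = 1 − δ if ρ ≥ 1, so λ̄ is constant in ρ on [1,∞) and strictly decreasing in the elasticity of substitution 1/ρ for ρ ∈ (0,1). (Proposition 4: comparative statics of the leverage threshold.) -/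
open Filter Topology MeasureTheory

/-- The asymptotic marginal product of capital `m` for the CES production function:
`m = A·α^{1/(1−ρ)} + 1 − δ` if `ρ < 1` and `m = 1 − δ` if `ρ ≥ 1`. -/
noncomputable def cesM (A a δ ρ : ℝ) : ℝ :=
  if ρ < 1 then A * a ^ (1 / (1 - ρ)) + 1 - δ else 1 - δ

/-!
`λ̄` is `(1 − β)/β` times the reciprocal of the expected payoff `E[max(mz − 1, 0)]`. Since
`Φ(z) < 1` for every `z`, each upper tail `z > 1/m` has positive mass, and there the payoffs of
distinct `m` differ: so the expectation is positive and strictly increasing in `m`. By the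
layer-cake formula it is `∫_0^∞ (1 − Φ((t + 1)/m)) dt`, which grows under first-order dominance.
For CES technology `F_K(K, 1) = Aα(α + (1 − α)K^{ρ−1})^{ρ/(1−ρ)} + 1 − δ` when `ρ ≠ 1`; as
`K → ∞` this tends to `Aα^{1/(1−ρ)} + 1 − δ` for `ρ < 1` (decreasing in `ρ` since `α < 1`) and
to `1 − δ` for `ρ > 1`, as does `Aα K^{α−1} + 1 − δ` for `ρ = 1`.
-/

open Set

section Integrals

variable {α : Type*} [MeasurableSpace α] {μ : Measure α}

theorem integral_lt_integral_of_le_of_measure_setOf_lt_pos {f g : α → ℝ}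
    (hf : Integrable f μ) (hg : Integrable g μ) (hfg : f ≤ g) (hlt : 0 < μ {x | f x < g x}) :
    ∫ x, f x ∂μ < ∫ x, g x ∂μ := by
  rw [← sub_pos, ← integral_sub hg hf]
  refine (integral_pos_iff_support_of_nonneg_ae (ae_of_all _ fun x => sub_nonneg.2 (hfg x))
    (hg.sub hf)).2 (hlt.trans_le (measure_mono fun x hx => ?_))
  exact sub_ne_zero.2 (ne_of_gt hx)

end Integrals

section PositivePart

variable {μ : Measure ℝ} {m m₁ m₂ : ℝ}

theorem measure_Ioi_pos_of_measure_Iic_lt_one [IsProbabilityMeasure μ] {c : ℝ}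
    (h : μ (Iic c) < 1) : 0 < μ (Ioi c) := by
  rw [← compl_Iic, prob_compl_eq_one_sub measurableSet_Iic]
  exact tsub_pos_of_lt h

theorem integrable_max_mul_sub_one [IsFiniteMeasure μ] (hμ : Integrable id μ) (m : ℝ) :
    Integrable (fun z => max (m * z - 1) 0) μ :=
  ((hμ.const_mul m).sub (integrable_const 1)).pos_part

theorem max_mul_sub_one_le_of_le (hm₁ : 0 ≤ m₁) (h : m₁ ≤ m₂) (z : ℝ) :
    max (m₁ * z - 1) 0 ≤ max (m₂ * z - 1) 0 := by
  rcases le_total 0 z with hz | hz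
  · exact max_le_max_right 0 (by nlinarith)
  · exact max_le (by nlinarith [le_max_right (m₂ * z - 1) 0]) (le_max_right _ _)

theorem max_mul_sub_one_lt_of_lt (hm₁ : 0 ≤ m₁) (h : m₁ < m₂) {z : ℝ} (hz : 1 < m₂ * z) :
    max (m₁ * z - 1) 0 < max (m₂ * z - 1) 0 := by
  have hz₀ : 0 < z := by nlinarith
  rw [max_eq_left (by linarith : (0 : ℝ) ≤ m₂ * z - 1)]
  exact max_lt (by nlinarith) (by linarith)

theorem strictMonoOn_integral_max_mul_sub_one [IsFiniteMeasure μ] (hμ : Integrable id μ)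
    (hpos : ∀ c, 0 < μ (Ioi c)) :
    StrictMonoOn (fun m => ∫ z, max (m * z - 1) 0 ∂μ) (Ici 0) := by
  intro m₁ hm₁ m₂ hm₂ h
  have hm₂₀ : 0 < m₂ := lt_of_le_of_lt hm₁ h
  refine integral_lt_integral_of_le_of_measure_setOf_lt_pos (integrable_max_mul_sub_one hμ m₁)
    (integrable_max_mul_sub_one hμ m₂) (max_mul_sub_one_le_of_le hm₁ h.le)
    ((hpos (1 / m₂)).trans_le (measure_mono fun z hz => ?_))
  exact max_mul_sub_one_lt_of_lt hm₁ h (by rwa [mem_Ioi, div_lt_iff₀' hm₂₀] at hz)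

theorem integral_max_mul_sub_one_pos [IsFiniteMeasure μ] (hμ : Integrable id μ)
    (hpos : ∀ c, 0 < μ (Ioi c)) (hm : 0 < m) : 0 < ∫ z, max (m * z - 1) 0 ∂μ := by
  simpa using strictMonoOn_integral_max_mul_sub_one hμ hpos (mem_Ici.2 le_rfl) hm.le hm

theorem setOf_lt_max_mul_sub_one (hm : 0 < m) {t : ℝ} (ht : 0 ≤ t) :
    {z | t < max (m * z - 1) 0} = Ioi ((t + 1) / m) := by
  ext z
  simp only [mem_ofPred_eq, mem_Ioi, lt_max_iff, div_lt_iff₀' hm, not_lt.2 ht, or_false]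
  constructor <;> intro h <;> linarith

theorem integral_max_mul_sub_one_le_of_measure_Ioi_le {μ₁ μ₂ : Measure ℝ} [IsFiniteMeasure μ₂]
    (hμ₂ : Integrable id μ₂) (hd : ∀ z, μ₁ (Ioi z) ≤ μ₂ (Ioi z)) (hm : 0 < m) :
    ∫ z, max (m * z - 1) 0 ∂μ₁ ≤ ∫ z, max (m * z - 1) 0 ∂μ₂ := by
  have hmeas : Measurable fun z : ℝ => max (m * z - 1) 0 := by fun_prop
  have hnn : ∀ (ν : Measure ℝ), 0 ≤ᵐ[ν] fun z => max (m * z - 1) 0 :=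
    fun ν => ae_of_all _ fun z => le_max_right _ _
  rw [integral_eq_lintegral_of_nonneg_ae (hnn μ₁) hmeas.aestronglyMeasurable,
    integral_eq_lintegral_of_nonneg_ae (hnn μ₂) hmeas.aestronglyMeasurable]
  refine ENNReal.toReal_mono (integrable_max_mul_sub_one hμ₂ m).lintegral_lt_top.ne ?_
  rw [lintegral_eq_lintegral_meas_lt μ₁ (hnn μ₁) hmeas.aemeasurable,
    lintegral_eq_lintegral_meas_lt μ₂ (hnn μ₂) hmeas.aemeasurable]
  refine setLIntegral_mono' measurableSet_Ioi fun t ht => ?_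
  rw [setOf_lt_max_mul_sub_one hm (le_of_lt ht)]
  exact hd _

end PositivePart

section LeverageThreshold

variable {μ : Measure ℝ} {β m : ℝ}

theorem Assumption1.measure_Ioi_pos_s11 (hμ : Assumption1 μ) (c : ℝ) : 0 < μ (Ioi c) := by
  have := hμ.prob
  exact measure_Ioi_pos_of_measure_Iic_lt_one (hμ.lt_one c)

theorem Assumption1.strictMonoOn_integral_max_mul_sub_one (hμ : Assumption1 μ) :
    StrictMonoOn (fun m => ∫ z, max (m * z - 1) 0 ∂μ) (Ici 0) := by
  have := hμ.prob
  exact _root_.strictMonoOn_integral_max_mul_sub_one hμ.finite_mean hμ.measure_Ioi_pos_s11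

theorem Assumption1.integral_max_mul_sub_one_pos (hμ : Assumption1 μ) (hm : 0 < m) :
    0 < ∫ z, max (m * z - 1) 0 ∂μ := by
  have := hμ.prob
  exact _root_.integral_max_mul_sub_one_pos hμ.finite_mean hμ.measure_Ioi_pos_s11 hm

theorem lamBar_strictAntiOn_beta (hμ : Assumption1 μ) (hm : 0 < m) :
    StrictAntiOn (fun β => lamBar β m μ) (Ioi 0) := by
  intro β₁ hβ₁ β₂ hβ₂ h
  have hcoef : (1 - β₂) / β₂ < (1 - β₁) / β₁ := by
    rw [div_lt_div_iff₀ hβ₂ hβ₁]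
    linarith
  exact mul_lt_mul_of_pos_right hcoef (inv_pos.2 (hμ.integral_max_mul_sub_one_pos hm))

theorem lamBar_strictAntiOn_m (hμ : Assumption1 μ) (hβ : β ∈ Ioo 0 1) :
    StrictAntiOn (fun m => lamBar β m μ) (Ioi 0) := by
  intro m₁ hm₁ m₂ hm₂ h
  have hI₁ := hμ.integral_max_mul_sub_one_pos hm₁
  have hI := hμ.strictMonoOn_integral_max_mul_sub_one (mem_Ici.2 (le_of_lt hm₁))
    (mem_Ici.2 (le_of_lt hm₂)) h
  exact mul_lt_mul_of_pos_left ((inv_lt_inv₀ (hI₁.trans hI) hI₁).2 hI)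
    (div_pos (sub_pos.2 hβ.2) hβ.1)

theorem lamBar_le_lamBar_of_measure_Ioi_le {μ₁ μ₂ : Measure ℝ} (h₁ : Assumption1 μ₁)
    (h₂ : Assumption1 μ₂) (hd : ∀ z, μ₁ (Ioi z) ≤ μ₂ (Ioi z)) (hβ : β ∈ Icc 0 1) (hm : 0 < m) :
    lamBar β m μ₂ ≤ lamBar β m μ₁ := by
  have := h₂.prob
  have hI₁ := h₁.integral_max_mul_sub_one_pos hm
  have hI := integral_max_mul_sub_one_le_of_measure_Ioi_le h₂.finite_mean hd hm
  exact mul_le_mul_of_nonneg_left ((inv_le_inv₀ (hI₁.trans_le hI) hI₁).2 hI)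
    (div_nonneg (sub_nonneg.2 hβ.2) hβ.1)

end LeverageThreshold

section CES

variable {A a ρ δ K : ℝ}

theorem hasDerivAt_cesF_rho_one (A a δ : ℝ) (hK : 0 < K) :
    HasDerivAt (fun k => cesF A a 1 δ k 1) (A * (a * K ^ (a - 1)) + (1 - δ)) K := by
  simp only [cesF, cesf, if_true, Real.one_rpow, mul_one]
  simpa using ((Real.hasDerivAt_rpow_const (p := a) (Or.inl hK.ne')).const_mul A).fun_add
    (hasDerivAt_const_mul (1 - δ))

theorem hasDerivAt_cesF_of_rho_ne_one (A δ : ℝ) (ha : a ∈ Icc 0 1) (hρ : ρ ≠ 1) (hK : 0 < K) :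
    HasDerivAt (fun k => cesF A a ρ δ k 1)
      (A * a * K ^ (-ρ) * (a * K ^ (1 - ρ) + (1 - a)) ^ (ρ / (1 - ρ)) + (1 - δ)) K := by
  have hs : 1 - ρ ≠ 0 := sub_ne_zero.2 hρ.symm
  have hinner : 0 < a * K ^ (1 - ρ) + (1 - a) := by
    have hKρ : 0 < K ^ (1 - ρ) := Real.rpow_pos_of_pos hK _
    rcases ha.2.lt_or_eq with ha₁ | rfl
    · nlinarith [ha.1]
    · simpa using hKρ
  simp only [cesF, cesf, if_neg hρ, Real.one_rpow, mul_one]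
  have h := ((((Real.hasDerivAt_rpow_const (p := 1 - ρ) (Or.inl hK.ne')).const_mul a).add_const
    (1 - a)).rpow_const (p := 1 / (1 - ρ)) (Or.inl hinner.ne')).const_mul A |>.fun_add
    (hasDerivAt_const_mul (1 - δ))
  refine h.congr_deriv ?_
  rw [show 1 / (1 - ρ) - 1 = ρ / (1 - ρ) by field_simp; ring, show 1 - ρ - 1 = -ρ by ring]
  field_simp

theorem rpow_neg_mul_ces_rpow (ha : a ∈ Icc 0 1) (hρ : ρ ≠ 1) (hK : 0 < K) :
    K ^ (-ρ) * (a * K ^ (1 - ρ) + (1 - a)) ^ (ρ / (1 - ρ)) =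
      (a + (1 - a) * K ^ (ρ - 1)) ^ (ρ / (1 - ρ)) := by
  have hs : 1 - ρ ≠ 0 := sub_ne_zero.2 hρ.symm
  have hneg : K ^ (-ρ) = (K ^ (ρ - 1)) ^ (ρ / (1 - ρ)) := by
    rw [← Real.rpow_mul hK.le]
    congr 1
    field_simp
    ring
  have hinv : K ^ (ρ - 1) * K ^ (1 - ρ) = 1 := by
    rw [← Real.rpow_add hK]
    simp
  have hinner : 0 ≤ a * K ^ (1 - ρ) + (1 - a) := by
    have := Real.rpow_pos_of_pos hK (1 - ρ)
    nlinarith [ha.1, ha.2]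
  rw [hneg, ← Real.mul_rpow (Real.rpow_pos_of_pos hK _).le hinner]
  congr 1
  linear_combination a * hinv

theorem cesFK_eventuallyEq_of_rho_ne_one (A δ : ℝ) (ha : a ∈ Icc 0 1) (hρ : ρ ≠ 1) :
    cesFK A a ρ δ =ᶠ[atTop]
      fun K => A * a * (a + (1 - a) * K ^ (ρ - 1)) ^ (ρ / (1 - ρ)) + (1 - δ) := by
  filter_upwards [eventually_gt_atTop 0] with K hK
  rw [cesFK, (hasDerivAt_cesF_of_rho_ne_one A δ ha hρ hK).deriv, mul_assoc (A * a),
    rpow_neg_mul_ces_rpow ha hρ hK]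

theorem tendsto_cesFK_of_rho_lt_one (A δ : ℝ) (ha : a ∈ Ioo 0 1) (hρ : ρ < 1) :
    Tendsto (cesFK A a ρ δ) atTop (𝓝 (cesM A a δ ρ)) := by
  have hpow : Tendsto (fun K : ℝ => K ^ (ρ - 1)) atTop (𝓝 0) := by
    simpa using tendsto_rpow_neg_atTop (sub_pos.2 hρ)
  have hlim : A * a * (a + (1 - a) * 0) ^ (ρ / (1 - ρ)) + (1 - δ) = cesM A a δ ρ := by
    have hs : 1 - ρ ≠ 0 := (sub_pos.2 hρ).ne'
    have he : 1 / (1 - ρ) = 1 + ρ / (1 - ρ) := by field_simp; ring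
    rw [mul_zero, add_zero, cesM, if_pos hρ, he, Real.rpow_add ha.1, Real.rpow_one]
    ring
  refine Tendsto.congr'
    (cesFK_eventuallyEq_of_rho_ne_one A δ (Ioo_subset_Icc_self ha) hρ.ne).symm ?_
  rw [← hlim]
  exact ((((hpow.const_mul (1 - a)).const_add a).rpow_const
    (Or.inl (by simpa using ha.1.ne'))).const_mul (A * a)).add_const (1 - δ)

theorem tendsto_cesFK_of_one_lt_rho (A δ : ℝ) (ha : a ∈ Ioo 0 1) (hρ : 1 < ρ) :
    Tendsto (cesFK A a ρ δ) atTop (𝓝 (cesM A a δ ρ)) := by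
  have hbase : Tendsto (fun K : ℝ => a + (1 - a) * K ^ (ρ - 1)) atTop atTop :=
    tendsto_atTop_add_const_left _ a
      ((tendsto_rpow_atTop (sub_pos.2 hρ)).const_mul_atTop (sub_pos.2 ha.2))
  have hpow : Tendsto (fun x : ℝ => x ^ (ρ / (1 - ρ))) atTop (𝓝 0) := by
    have := tendsto_rpow_neg_atTop (div_pos (zero_lt_one.trans hρ) (sub_pos.2 hρ))
    rwa [← div_neg, neg_sub] at this
  have hlim : A * a * 0 + (1 - δ) = cesM A a δ ρ := by
    rw [cesM, if_neg (not_lt.2 hρ.le)]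
    ring
  refine Tendsto.congr'
    (cesFK_eventuallyEq_of_rho_ne_one A δ (Ioo_subset_Icc_self ha) hρ.ne').symm ?_
  rw [← hlim]
  exact ((hpow.comp hbase).const_mul (A * a)).add_const (1 - δ)

theorem tendsto_cesFK_rho_one (A δ : ℝ) (ha : a < 1) :
    Tendsto (cesFK A a 1 δ) atTop (𝓝 (cesM A a δ 1)) := by
  have hpow : Tendsto (fun K : ℝ => K ^ (a - 1)) atTop (𝓝 0) := by
    simpa using tendsto_rpow_neg_atTop (sub_pos.2 ha)
  have hlim : A * (a * 0) + (1 - δ) = cesM A a δ 1 := by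
    rw [cesM, if_neg (lt_irrefl 1)]
    ring
  refine Tendsto.congr' ?_ (hlim ▸ ((hpow.const_mul a).const_mul A).add_const (1 - δ))
  filter_upwards [eventually_gt_atTop 0] with K hK
  exact ((hasDerivAt_cesF_rho_one A a δ hK).deriv).symm

theorem tendsto_cesFK (A δ : ℝ) (ha : a ∈ Ioo 0 1) :
    Tendsto (cesFK A a ρ δ) atTop (𝓝 (cesM A a δ ρ)) := by
  rcases lt_trichotomy ρ 1 with hρ | rfl | hρ
  · exact tendsto_cesFK_of_rho_lt_one A δ ha hρ
  · exact tendsto_cesFK_rho_one A δ ha.2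
  · exact tendsto_cesFK_of_one_lt_rho A δ ha hρ

theorem cesM_of_one_le (A a δ : ℝ) (hρ : 1 ≤ ρ) : cesM A a δ ρ = 1 - δ :=
  if_neg (not_lt.2 hρ)

theorem cesM_pos (ρ : ℝ) (hA : 0 ≤ A) (ha : 0 ≤ a) (hδ : δ < 1) : 0 < cesM A a δ ρ := by
  unfold cesM
  split_ifs
  · have := mul_nonneg hA (Real.rpow_nonneg ha (1 / (1 - ρ)))
    linarith
  · linarith

theorem cesM_strictAntiOn (δ : ℝ) (hA : 0 < A) (ha : a ∈ Ioo 0 1) :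
    StrictAntiOn (cesM A a δ) (Iio 1) := by
  intro ρ₁ hρ₁ ρ₂ hρ₂ h
  rw [mem_Iio] at hρ₁ hρ₂
  simp only [cesM, if_pos hρ₁, if_pos hρ₂, add_sub_assoc, add_lt_add_iff_right]
  have hexp : 1 / (1 - ρ₁) < 1 / (1 - ρ₂) :=
    one_div_lt_one_div_of_lt (sub_pos.2 hρ₂) (by linarith)
  exact mul_lt_mul_of_pos_left (Real.rpow_lt_rpow_of_exponent_gt ha.1 ha.2 hexp) hA

end CES

/-- **Proposition 4 (comparative statics of the leverage threshold).**
(i) `λ̄` is strictly decreasing in `β`; (ii) strictly decreasing in `m`;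
(iii) decreasing with respect to first-order stochastic dominance of `Φ`;
(iv) for the CES production function, `m = A·α^{1/(1−ρ)} + 1 − δ` if `ρ < 1` and
`m = 1 − δ` if `ρ ≥ 1`, so `λ̄` is constant in `ρ` on `[1,∞)` and strictly decreasing
in the elasticity of substitution `1/ρ` for `ρ ∈ (0,1)`. -/
theorem comparative_statics_leverage_threshold
    (μ : Measure ℝ) (hμ : Assumption1 μ) :
    (∀ m : ℝ, 0 < m → StrictAntiOn (fun β => lamBar β m μ) (Set.Ioo (0 : ℝ) 1)) ∧
    (∀ β : ℝ, β ∈ Set.Ioo (0 : ℝ) 1 → StrictAntiOn (fun m => lamBar β m μ) (Set.Ioi (0 : ℝ))) ∧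
    (∀ μ₁ μ₂ : Measure ℝ, Assumption1 μ₁ → Assumption1 μ₂ →
      (∀ z : ℝ, μ₁ (Set.Ioi z) ≤ μ₂ (Set.Ioi z)) →
      ∀ β : ℝ, β ∈ Set.Ioo (0 : ℝ) 1 → ∀ m : ℝ, 0 < m →
        lamBar β m μ₂ ≤ lamBar β m μ₁) ∧
    (∀ A a δ : ℝ, 0 < A → a ∈ Set.Ioo (0 : ℝ) 1 → δ ∈ Set.Ioo (0 : ℝ) 1 →
      (∀ ρ : ℝ, 0 < ρ →
        Tendsto (fun K => cesFK A a ρ δ K) atTop (𝓝 (cesM A a δ ρ))) ∧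
      (∀ β : ℝ, β ∈ Set.Ioo (0 : ℝ) 1 →
        (∀ ρ₁ ρ₂ : ℝ, 1 ≤ ρ₁ → 1 ≤ ρ₂ →
          lamBar β (cesM A a δ ρ₁) μ = lamBar β (cesM A a δ ρ₂) μ) ∧
        (∀ ρ₁ ρ₂ : ℝ, 0 < ρ₁ → ρ₁ < ρ₂ → ρ₂ < 1 →
          lamBar β (cesM A a δ ρ₁) μ < lamBar β (cesM A a δ ρ₂) μ))) := by
  refine ⟨fun m hm => (lamBar_strictAntiOn_beta hμ hm).mono Ioo_subset_Ioi_self,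
    fun β hβ => lamBar_strictAntiOn_m hμ hβ,
    fun μ₁ μ₂ h₁ h₂ hd β hβ m hm =>
      lamBar_le_lamBar_of_measure_Ioi_le h₁ h₂ hd (Ioo_subset_Icc_self hβ) hm,
    fun A a δ hA ha hδ => ⟨fun ρ _ => tendsto_cesFK A δ ha, fun β hβ => ⟨?_, ?_⟩⟩⟩
  · intro ρ₁ ρ₂ h₁ h₂
    rw [cesM_of_one_le A a δ h₁, cesM_of_one_le A a δ h₂]
  · intro ρ₁ ρ₂ _ h₁₂ h₂
    have hpos : ∀ ρ, 0 < cesM A a δ ρ := fun ρ => cesM_pos ρ hA.le ha.1.le hδ.2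
    exact lamBar_strictAntiOn_m hμ hβ (hpos ρ₂) (hpos ρ₁)
      (cesM_strictAntiOn δ hA ha (h₁₂.trans h₂) h₂ h₁₂)
end

section
/- In any trend stationary equilibrium of the two-sector large open economy, the growth rate satisfies G ≥ 1. (Lemma: no trend stationary equilibrium has negative long-run growth.) -/
open Filter Topology MeasureTheory

/-- The risk premium `π(R) = ∫ max{0, mz − R} dΦ(z)` on unlevered capital investment. -/
noncomputable def premium (μ : Measure ℝ) (m R : ℝ) : ℝ := ∫ z, max 0 (m * z - R) ∂μ

/-- **Trend stationary equilibrium** of the two-sector large open economy with linear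
technology `F(K,X) = mK + DX`: gross risk-free rate `R > 1`, growth rate `G > 0`,
threshold `z̄ = R/m` with `Φ(z̄) > 1 − 1/λ`, and sequences of aggregate wealth,
capital, land price, and external savings satisfying the equilibrium conditions,
with `B_t/W_t → 0`. -/
structure TSE (μ : Measure ℝ) (β lam m D : ℝ)
    (R G : ℝ) (W K P B : ℕ → ℝ) : Prop where
  hR : 1 < R
  hG : 0 < G
  hthr : 1 - 1 / lam < Phi μ (R / m)
  hW : ∀ t, 0 < W t
  hP : ∀ t, 0 < P t
  price : ∀ t, R = (P (t + 1) + D) / P t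
  growth : G = β * (R + lam * premium μ m R)
  Wdyn : ∀ t, W (t + 1) = G * W t
  Kdyn : ∀ t, K (t + 1) = β * lam * W t * ∫ z in Set.Ioi (R / m), z ∂μ
  bond : ∀ t, P t + B t = β * (lam * Phi μ (R / m) + 1 - lam) * W t
  wealth : ∀ t, W (t + 1) = m * K (t + 1) + R * (P t + B t)
  hBW : Filter.Tendsto (fun t => B t / W t) Filter.atTop (nhds 0)

/-!
Suppose `G < 1`. The land price obeys `P_{t+1} = R P_t - D`, so `P_t - D/(R-1)` grows
geometrically at rate `R > 1`; since `P_t > 0` this deviation is nonnegative, hence the land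
price is nondecreasing and `P_t ≥ P_0`. Wealth `W_t = G^t W_0` shrinks, so `P_t / W_t → ∞`.
But `P_t + B_t` is a fixed fraction of `W_t` and `B_t / W_t → 0`, so `P_t / W_t` converges.
-/

lemma eq_pow_mul_of_succ_eq_mul {r : ℝ} {y : ℕ → ℝ} (hy : ∀ t, y (t + 1) = r * y t)
    (s n : ℕ) : y (s + n) = r ^ n * y s := by
  induction n with
  | zero => simp
  | succ n ih => rw [← add_assoc, hy, ih]; ring

lemma nonneg_of_succ_eq_mul_of_bddBelow {r : ℝ} (hr : 1 < r) {y : ℕ → ℝ}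
    (hy : ∀ t, y (t + 1) = r * y t) (hbdd : BddBelow (Set.range y)) (s : ℕ) : 0 ≤ y s := by
  by_contra! hneg
  obtain ⟨a, ha⟩ := hbdd
  have hbot : Tendsto (fun n => r ^ n * y s) atTop atBot :=
    (tendsto_pow_atTop_atTop_of_one_lt hr).atTop_mul_const_of_neg hneg
  obtain ⟨n, hn⟩ := (hbot.eventually_lt_atBot a).exists
  rw [← eq_pow_mul_of_succ_eq_mul hy] at hn
  exact hn.not_ge (ha ⟨s + n, rfl⟩)

/-- The deviation from the fixed point `D / (R - 1)` grows geometrically, so boundedness below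
forces it to be nonnegative, and then `x_{t+1} - x_t = (R - 1)(x_t - D/(R-1)) ≥ 0`. -/
lemma monotone_of_succ_eq_mul_sub_of_bddBelow {R D : ℝ} (hR : 1 < R) {x : ℕ → ℝ}
    (hx : ∀ t, x (t + 1) = R * x t - D) (hbdd : BddBelow (Set.range x)) : Monotone x := by
  have hR1 : R - 1 ≠ 0 := by linarith
  set c := D / (R - 1)
  have hc : c * (R - 1) = D := div_mul_cancel₀ D hR1
  have hdev : ∀ t, x (t + 1) - c = R * (x t - c) := fun t => by
    rw [hx]; linarith
  have hdev_bdd : BddBelow (Set.range fun t => x t - c) := by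
    obtain ⟨a, ha⟩ := hbdd
    exact ⟨a - c, by rintro _ ⟨t, rfl⟩; linarith [ha ⟨t, rfl⟩]⟩
  refine monotone_nat_of_le_succ fun t => ?_
  have := nonneg_of_succ_eq_mul_of_bddBelow hR hdev hdev_bdd t
  nlinarith [hdev t]

namespace TSE

variable {μ : Measure ℝ} {β lam m D R G : ℝ} {W K P B : ℕ → ℝ}

lemma price_succ (h : TSE μ β lam m D R G W K P B) (t : ℕ) : P (t + 1) = R * P t - D := by
  have := h.price t
  rw [eq_div_iff (h.hP t).ne'] at this
  linarith

lemma monotone_price (h : TSE μ β lam m D R G W K P B) : Monotone P :=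
  monotone_of_succ_eq_mul_sub_of_bddBelow h.hR h.price_succ
    ⟨0, by rintro _ ⟨t, rfl⟩; exact (h.hP t).le⟩

lemma wealth_eq (h : TSE μ β lam m D R G W K P B) (t : ℕ) : W t = G ^ t * W 0 := by
  simpa using eq_pow_mul_of_succ_eq_mul h.Wdyn 0 t

lemma tendsto_price_div_wealth (h : TSE μ β lam m D R G W K P B) :
    Tendsto (fun t => P t / W t) atTop (𝓝 (β * (lam * Phi μ (R / m) + 1 - lam))) := by
  have hPW : ∀ t, P t / W t = β * (lam * Phi μ (R / m) + 1 - lam) - B t / W t := fun t => by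
    rw [eq_sub_iff_add_eq, ← add_div, h.bond, mul_div_cancel_right₀ _ (h.hW t).ne']
  simp_rw [hPW]
  simpa using tendsto_const_nhds.sub h.hBW

lemma tendsto_price_div_wealth_atTop_of_lt_one (h : TSE μ β lam m D R G W K P B) (hG1 : G < 1) :
    Tendsto (fun t => P t / W t) atTop atTop := by
  have hlower : ∀ t, P 0 / W 0 * G⁻¹ ^ t ≤ P t / W t := fun t => by
    have hW0 := h.hW 0
    have hGt := pow_pos h.hG t
    rw [h.wealth_eq t, inv_pow, mul_comm (G ^ t), ← div_div, div_eq_mul_inv (P t / W 0)]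
    gcongr
    exact h.monotone_price t.zero_le
  refine tendsto_atTop_mono hlower ?_
  exact (tendsto_pow_atTop_atTop_of_one_lt ((one_lt_inv₀ h.hG).mpr hG1)).const_mul_atTop
    (div_pos (h.hP 0) (h.hW 0))

end TSE

theorem tse_growth_ge_one_general
    (μ : Measure ℝ)
    (β lam m D : ℝ)
    (R G : ℝ) (W K P B : ℕ → ℝ)
    (heq : TSE μ β lam m D R G W K P B) :
    1 ≤ G := by
  by_contra! hG1
  exact heq.tendsto_price_div_wealth.not_tendsto (disjoint_nhds_atTop _)
    (heq.tendsto_price_div_wealth_atTop_of_lt_one hG1)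

/-- **Lemma.** In any trend stationary equilibrium of the two-sector large open
economy, the growth rate satisfies `G ≥ 1`. -/
theorem tse_growth_ge_one
    (μ : Measure ℝ) (hμ : Assumption1 μ)
    (β lam m D : ℝ) (hβ : β ∈ Set.Ioo (0 : ℝ) 1) (hlam : 1 ≤ lam)
    (hm : 0 < m) (hD : 0 < D)
    (R G : ℝ) (W K P B : ℕ → ℝ)
    (heq : TSE μ β lam m D R G W K P B) :
    1 ≤ G :=
  tse_growth_ge_one_general μ β lam m D R G W K P B heq
end

section
/- In any trend stationary equilibrium of the two-sector large open economy with growth rate G = 1, the external savings satisfy B_t = 0 and the land price equals its fundamental value P_t = D/(R−1) for all t. (Lemma: a non-growing trend stationary equilibrium is fundamental.) -/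
open Filter Topology MeasureTheory

/-- **Lemma.** In any trend stationary equilibrium of the two-sector large open
economy with growth rate `G = 1`, external savings vanish (`B_t = 0`) and the land
price equals its fundamental value `D/(R−1)` for all `t`. -/
theorem tse_no_growth_fundamental
    (μ : Measure ℝ) (hμ : Assumption1 μ)
    (β lam m D : ℝ) (hβ : β ∈ Set.Ioo (0 : ℝ) 1) (hlam : 1 ≤ lam)
    (hm : 0 < m) (hD : 0 < D)
    (R G : ℝ) (W K P B : ℕ → ℝ)
    (heq : TSE μ β lam m D R G W K P B) (hG : G = 1) :
    (∀ t, B t = 0) ∧ (∀ t, P t = D / (R - 1)) := by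
  classical
  have hR := heq.hR
  have hRne : R - 1 ≠ 0 := by linarith
  set F : ℝ := D / (R - 1) with hFdef
  set c : ℝ := β * (lam * Phi μ (R / m) + 1 - lam) * W 0 with hcdef
  have hW0 : (0:ℝ) < W 0 := heq.hW 0
  have hWconst : ∀ t, W t = W 0 := by
    intro t
    induction t with
    | zero => rfl
    | succ n ih => rw [heq.Wdyn n, hG, one_mul, ih]
  have hBeq : ∀ t, B t = c - P t := by
    intro t
    have h := heq.bond t
    rw [hWconst t] at h
    rw [hcdef]; linarith
  have hBtend : Tendsto B atTop (nhds 0) := by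
    have h := heq.hBW.mul_const (W 0)
    rw [zero_mul] at h
    refine h.congr fun t => ?_
    rw [hWconst t]
    field_simp
  have hPtend : Tendsto P atTop (nhds c) := by
    have : Tendsto (fun t => c - B t) atTop (nhds (c - 0)) :=
      tendsto_const_nhds.sub hBtend
    rw [sub_zero] at this
    refine this.congr fun t => ?_
    rw [hBeq t]; ring
  have Prec : ∀ t, P (t + 1) = R * P t - D := by
    intro t
    have h := heq.price t
    have hp : P t ≠ 0 := (heq.hP t).ne'
    rw [eq_div_iff hp] at h
    linarith
  have hF : R * F = D + F := by
    rw [hFdef]; field_simp; ring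
  have Qrec : ∀ t, P (t + 1) - F = R * (P t - F) := by
    intro t
    have := Prec t
    nlinarith [hF]
  have Qtend : Tendsto (fun t => P t - F) atTop (nhds (c - F)) := hPtend.sub_const F
  have Qshift : Tendsto (fun t => P (t + 1) - F) atTop (nhds (c - F)) := by
    exact Qtend.comp (tendsto_add_atTop_nat 1)
  have Qshift' : Tendsto (fun t => P (t + 1) - F) atTop (nhds (R * (c - F))) := by
    have h := Qtend.const_mul R
    refine h.congr fun t => (Qrec t).symm
  have hcF : c - F = 0 := by
    have huniq : c - F = R * (c - F) := tendsto_nhds_unique Qshift Qshift'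
    nlinarith
  have Qtend0 : Tendsto (fun t => P t - F) atTop (nhds 0) := by
    rw [← hcF]; exact Qtend
  have QR : ∀ t, P t - F = R ^ t * (P 0 - F) := by
    intro t
    induction t with
    | zero => simp
    | succ n ih => rw [Qrec n, ih, pow_succ]; ring
  have hP0 : P 0 = F := by
    by_contra hne
    have hpos : 0 < |P 0 - F| := abs_pos.mpr (sub_ne_zero.mpr hne)
    have habs : Tendsto (fun t => |P t - F|) atTop (nhds 0) := by
      have := Qtend0.abs; rwa [abs_zero] at this
    obtain ⟨t, ht⟩ := (habs.eventually_lt_const hpos).exists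
    have h1 : (1:ℝ) ≤ R ^ t := one_le_pow₀ hR.le
    have h2 : |P t - F| = R ^ t * |P 0 - F| := by
      rw [QR t, abs_mul, abs_of_pos (by positivity : (0:ℝ) < R ^ t)]
    nlinarith
  have Pconst : ∀ t, P t = F := by
    intro t
    have := QR t
    rw [hP0, sub_self, mul_zero, sub_eq_zero] at this
    exact this
  refine ⟨fun t => ?_, fun t => Pconst t⟩
  rw [hBeq t, Pconst t]
  linarith
end

section
/- In any trend stationary equilibrium of the two-sector large open economy with growth rate G > 1, writing α = β(λΦ(R/m) + 1 − λ), we have: G = R; B_t = −D/(R−1) for all t; W_t = m·K_t/(1−α) and P_t = (α/(1−α))·m·K_t + D/(R−1) for all t ≥ 1; and if in addition W_0 = m·K_0/(1−α) for the initial capital K_0, then P_t = (α/(1−α))·R^t·m·K_0 + D/(R−1) for all t ≥ 0, so the land price strictly exceeds its fundamental value D/(R−1). (Lemma: a growing trend stationary equilibrium is bubbly with explicit price path.) -/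
open Filter Topology MeasureTheory

/-!
Write `α` for the share of wealth held in land and bonds and `c = D/(R-1)` for the fundamental
value of land. Combining the no-arbitrage recursion `P_{t+1} = R P_t - D` with
`P_t + B_t = α W_t` and `W_{t+1} = G W_t` gives, for the normalised bond gap
`y_t = (B_t + c)/W_t`, the affine recursion `y_{t+1} = α(G - R)/G + (R/G) y_t`.
Since `W_t` grows geometrically, `B_t/W_t → 0` forces `y_t → 0`, so the constant term vanishes:
`G = R`. Then `y` is constant, hence zero, i.e. `B_t = -c`, and `P_t = α W_t + c > c`.
The wealth equation becomes `(1 - α) W_{t+1} = m K_{t+1}`, where `0 < α < 1`.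
-/

/-- The share `α = β(λΦ(R/m) + 1 - λ)` of wealth held in the safe assets, land and bonds. -/
noncomputable def safeAssetShare (μ : Measure ℝ) (β lam m R : ℝ) : ℝ :=
  β * (lam * Phi μ (R / m) + 1 - lam)

theorem Phi_le_one (μ : Measure ℝ) [IsZeroOrProbabilityMeasure μ] (z : ℝ) : Phi μ z ≤ 1 :=
  measureReal_le_one

theorem safeAssetShare_pos {μ : Measure ℝ} {β lam m R : ℝ} (hβ : 0 < β) (hlam : 0 < lam)
    (hthr : 1 - 1 / lam < Phi μ (R / m)) : 0 < safeAssetShare μ β lam m R := by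
  have : lam * (1 - 1 / lam) = lam - 1 := by field_simp
  have : lam * (1 - 1 / lam) < lam * Phi μ (R / m) := mul_lt_mul_of_pos_left hthr hlam
  unfold safeAssetShare
  apply mul_pos hβ
  linarith

theorem safeAssetShare_lt_one (μ : Measure ℝ) [IsZeroOrProbabilityMeasure μ] {β lam : ℝ}
    (m R : ℝ) (hβ₀ : 0 ≤ β) (hβ₁ : β < 1) (hlam : 0 ≤ lam) :
    safeAssetShare μ β lam m R < 1 := by
  have : lam * Phi μ (R / m) ≤ lam := mul_le_of_le_one_right hlam (Phi_le_one μ _)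
  unfold safeAssetShare
  nlinarith

theorem eq_zero_of_tendsto_zero_of_affine_rec {α : Type*} [Ring α] [TopologicalSpace α]
    [IsTopologicalRing α] [T2Space α] {y : ℕ → α} {a r : α}
    (hy : Tendsto y atTop (𝓝 0)) (hrec : ∀ t, y (t + 1) = a + r * y t) : a = 0 := by
  have hshift : Tendsto (fun t => a + r * y t) atTop (𝓝 (a + r * 0)) :=
    tendsto_const_nhds.add (hy.const_mul r)
  have hsucc : Tendsto (fun t => a + r * y t) atTop (𝓝 0) :=
    (hy.comp (tendsto_add_atTop_nat 1)).congr hrec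
  simpa using tendsto_nhds_unique hshift hsucc

theorem eq_zero_of_tendsto_zero_of_succ_eq {α : Type*} [TopologicalSpace α] [T2Space α] [Zero α]
    {y : ℕ → α} (hy : Tendsto y atTop (𝓝 0)) (hrec : ∀ t, y (t + 1) = y t) (t : ℕ) : y t = 0 := by
  have hconst : ∀ t, y t = y 0 := fun t => by
    induction t with
    | zero => rfl
    | succ n ih => rw [hrec, ih]
  have : y = fun _ => y 0 := funext hconst
  rw [this, tendsto_const_nhds_iff] at hy
  rw [hconst, hy]

namespace TSE

variable {μ : Measure ℝ} {β lam m D R G : ℝ} {W K P B : ℕ → ℝ}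
  (h : TSE μ β lam m D R G W K P B)
include h

local notation "α" => safeAssetShare μ β lam m R

theorem W_eq_pow (t : ℕ) : W t = G ^ t * W 0 := by
  induction t with
  | zero => simp
  | succ n ih => rw [h.Wdyn n, ih, pow_succ]; ring

theorem tendsto_W_atTop (hG : 1 < G) : Tendsto W atTop atTop := by
  have : Tendsto (fun t : ℕ => G ^ t * W 0) atTop atTop :=
    (tendsto_pow_atTop_atTop_of_one_lt hG).atTop_mul_const (h.hW 0)
  exact this.congr fun t => (h.W_eq_pow t).symm

theorem price_succ_s14 (t : ℕ) : P (t + 1) = R * P t - D := by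
  have hpr := h.price t
  rw [eq_div_iff (h.hP t).ne'] at hpr
  linarith

theorem safe_assets_eq (t : ℕ) : P t + B t = α * W t := h.bond t

theorem bond_gap_succ (t : ℕ) :
    B (t + 1) + D / (R - 1) = α * (G - R) * W t + R * (B t + D / (R - 1)) := by
  have hR : R - 1 ≠ 0 := sub_ne_zero.mpr h.hR.ne'
  have hfund : R * (D / (R - 1)) - D / (R - 1) = D := by field_simp
  linear_combination h.safe_assets_eq (t + 1) - h.price_succ_s14 t - R * h.safe_assets_eq t
    + α * h.Wdyn t - hfund

theorem bond_gap_ratio_succ (t : ℕ) :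
    (B (t + 1) + D / (R - 1)) / W (t + 1)
      = α * (G - R) / G + R / G * ((B t + D / (R - 1)) / W t) := by
  have hW := (h.hW t).ne'
  have hG := h.hG.ne'
  rw [h.bond_gap_succ t, h.Wdyn t]
  field_simp

theorem tendsto_bond_gap_ratio (hG : 1 < G) :
    Tendsto (fun t => (B t + D / (R - 1)) / W t) atTop (𝓝 0) := by
  have hfund : Tendsto (fun t => D / (R - 1) / W t) atTop (𝓝 0) :=
    tendsto_const_nhds.div_atTop (h.tendsto_W_atTop hG)
  simpa [add_div] using h.hBW.add hfund

theorem growth_eq_rate (hG : 1 < G) (hα : α ≠ 0) : G = R := by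
  have hconst := eq_zero_of_tendsto_zero_of_affine_rec (h.tendsto_bond_gap_ratio hG)
    h.bond_gap_ratio_succ
  rcases div_eq_zero_iff.mp hconst with hzero | hzero
  · rcases mul_eq_zero.mp hzero with h0 | h0
    · exact absurd h0 hα
    · linarith
  · linarith

theorem bond_eq (hG : 1 < G) (hα : α ≠ 0) (t : ℕ) : B t = -(D / (R - 1)) := by
  have hGR := h.growth_eq_rate hG hα
  have hrec : ∀ t, (B (t + 1) + D / (R - 1)) / W (t + 1) = (B t + D / (R - 1)) / W t := by
    intro t
    rw [h.bond_gap_ratio_succ t, hGR, sub_self, mul_zero, zero_div, zero_add,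
      div_self (zero_lt_one.trans h.hR).ne', one_mul]
  have hgap := eq_zero_of_tendsto_zero_of_succ_eq (h.tendsto_bond_gap_ratio hG) hrec t
  rw [div_eq_zero_iff, or_iff_left (h.hW t).ne'] at hgap
  linarith

theorem price_eq (hG : 1 < G) (hα : α ≠ 0) (t : ℕ) : P t = α * W t + D / (R - 1) := by
  linarith [h.safe_assets_eq t, h.bond_eq hG hα t]

theorem wealth_eq_s14 (hG : 1 < G) (hα : α ≠ 0) (hα₁ : α ≠ 1) (t : ℕ) :
    W (t + 1) = m * K (t + 1) / (1 - α) := by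
  have hWR : W (t + 1) = R * W t := by rw [h.Wdyn t, h.growth_eq_rate hG hα]
  have hwealth := h.wealth t
  rw [h.safe_assets_eq t] at hwealth
  rw [eq_div_iff (sub_ne_zero.mpr hα₁.symm)]
  linear_combination hwealth - α * hWR

end TSE

theorem tse_growth_bubbly_general
    (μ : Measure ℝ) (hμ : Assumption1 μ)
    (β lam m D : ℝ) (hβ : β ∈ Set.Ioo (0 : ℝ) 1) (hlam : 1 ≤ lam)
    (R G : ℝ) (W K P B : ℕ → ℝ)
    (heq : TSE μ β lam m D R G W K P B) (hG : 1 < G)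
    (alph : ℝ) (halph : alph = β * (lam * Phi μ (R / m) + 1 - lam)) :
    G = R ∧
    (∀ t, B t = -(D / (R - 1))) ∧
    (∀ t, 1 ≤ t → W t = m * K t / (1 - alph) ∧
      P t = alph / (1 - alph) * (m * K t) + D / (R - 1)) ∧
    (W 0 = m * K 0 / (1 - alph) →
      ∀ t, P t = alph / (1 - alph) * R ^ t * (m * K 0) + D / (R - 1)) ∧
    (∀ t, D / (R - 1) < P t) := by
  obtain rfl : alph = safeAssetShare μ β lam m R := halph
  have hprob := hμ.prob
  have hα₀ := safeAssetShare_pos hβ.1 (by linarith) heq.hthr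
  have hα₁ := safeAssetShare_lt_one μ m R hβ.1.le hβ.2 (by linarith : (0 : ℝ) ≤ lam)
  have hGR := heq.growth_eq_rate hG hα₀.ne'
  have hP := heq.price_eq hG hα₀.ne'
  refine ⟨hGR, heq.bond_eq hG hα₀.ne', ?_, ?_, fun t => ?_⟩
  · rintro (_ | t) ht
    · omega
    · have hW := heq.wealth_eq_s14 hG hα₀.ne' hα₁.ne t
      refine ⟨hW, ?_⟩
      rw [hP, hW]
      ring
  · intro hW₀ t
    rw [hP, heq.W_eq_pow, hGR, hW₀]
    ring
  · linarith [hP t, mul_pos hα₀ (heq.hW t)]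

/-- **Lemma.** In any trend stationary equilibrium of the two-sector large open economy
with growth rate `G > 1`, writing `α = β(λΦ(R/m) + 1 − λ)`: `G = R`;
`B_t = −D/(R−1)`; `W_t = mK_t/(1−α)` and `P_t = (α/(1−α))mK_t + D/(R−1)` for `t ≥ 1`;
if moreover `W₀ = mK₀/(1−α)`, then `P_t = (α/(1−α))·R^t·mK₀ + D/(R−1)` for all `t`;
and the land price strictly exceeds its fundamental value `D/(R−1)`. -/
theorem tse_growth_bubbly
    (μ : Measure ℝ) (hμ : Assumption1 μ)
    (β lam m D : ℝ) (hβ : β ∈ Set.Ioo (0 : ℝ) 1) (hlam : 1 ≤ lam)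
    (hm : 0 < m) (hD : 0 < D)
    (R G : ℝ) (W K P B : ℕ → ℝ)
    (heq : TSE μ β lam m D R G W K P B) (hG : 1 < G)
    (alph : ℝ) (halph : alph = β * (lam * Phi μ (R / m) + 1 - lam)) :
    G = R ∧
    (∀ t, B t = -(D / (R - 1))) ∧
    (∀ t, 1 ≤ t → W t = m * K t / (1 - alph) ∧
      P t = alph / (1 - alph) * (m * K t) + D / (R - 1)) ∧
    (W 0 = m * K 0 / (1 - alph) →
      ∀ t, P t = alph / (1 - alph) * R ^ t * (m * K 0) + D / (R - 1)) ∧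
    (∀ t, D / (R - 1) < P t) :=
  tse_growth_bubbly_general μ hμ β lam m D hβ hlam R G W K P B heq hG alph halph
end
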